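/- arXiv:2407.15196 — 8 statements merged into one kernel-verified Lean document; each statement's English description precedes it below -/
import Mathlib

section
/- There exists a unitary matrix Θ ∈ ℂ^{N_S×N_S} such that rank(H_B·Θ·H_F) = min(rank(H_B), rank(H_F)). -/
open Matrix Module LinearMap Submodule

/-- Abstract core: in a finite-dimensional complex inner product space `E`, for linear maps
`g : E →ₗ W` and `h : V →ₗ E`, there is a linear isometry `u : E →ₗ E` (given with
`adjoint u ∘ₗ u = id`) such that the rank of `g ∘ u ∘ h` equals `min (rank g) (rank h)`. -/
theorem stmt1_aux {E V W : Type*} [NormedAddCommGroup E] [InnerProductSpace ℂ E]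
    [FiniteDimensional ℂ E] [AddCommGroup V] [Module ℂ V] [AddCommGroup W] [Module ℂ W]
    (g : E →ₗ[ℂ] W) (h : V →ₗ[ℂ] E) :
    ∃ u : E →ₗ[ℂ] E, (LinearMap.adjoint u ∘ₗ u = LinearMap.id) ∧
      finrank ℂ (LinearMap.range (g ∘ₗ (u ∘ₗ h))) =
        min (finrank ℂ (LinearMap.range g)) (finrank ℂ (LinearMap.range h)) := by
  classical
  set K : Submodule ℂ E := LinearMap.ker g with hK
  set F : Submodule ℂ E := LinearMap.range h with hF
  set b := finrank ℂ (↥Kᗮ) with hbdef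
  set f := finrank ℂ (↥F) with hfdef
  set c := finrank ℂ (↥K) with hcdef
  set m := min b f with hm
  have hbc : c + b = finrank ℂ E := K.finrank_add_finrank_orthogonal
  have hrn : finrank ℂ (LinearMap.range g) + c = finrank ℂ E :=
    LinearMap.finrank_range_add_finrank_ker g
  have hb : finrank ℂ (LinearMap.range g) = b := by omega
  have hfNS : f ≤ finrank ℂ E := F.finrank_le
  -- orthonormal bases
  set v : OrthonormalBasis (Fin f) ℂ F := stdOrthonormalBasis ℂ F with hv
  set w : OrthonormalBasis (Fin b) ℂ Kᗮ := stdOrthonormalBasis ℂ ↥Kᗮ with hw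
  set k : OrthonormalBasis (Fin c) ℂ K := stdOrthonormalBasis ℂ K with hk
  have hwo : Orthonormal ℂ (fun j : Fin b => (w j : E)) :=
    w.orthonormal.comp_linearIsometry Kᗮ.subtypeₗᵢ
  have hko : Orthonormal ℂ (fun j : Fin c => (k j : E)) :=
    k.orthonormal.comp_linearIsometry K.subtypeₗᵢ
  -- the target family
  have hidx : ∀ i : Fin f, ¬ ((i : ℕ) < m) → (i : ℕ) - m < c := by
    intro i hi; have := i.isLt; omega
  set t : Fin f → E := fun i =>
    if hi : (i : ℕ) < m then (w ⟨i, lt_of_lt_of_le hi (min_le_left b f)⟩ : E)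
    else (k ⟨(i : ℕ) - m, hidx i hi⟩ : E) with ht
  have htw : ∀ (i : Fin f) (hi : (i : ℕ) < m),
      t i = (w ⟨i, lt_of_lt_of_le hi (min_le_left b f)⟩ : E) := fun i hi => dif_pos hi
  have htk : ∀ (i : Fin f) (hi : ¬ ((i : ℕ) < m)),
      t i = (k ⟨(i : ℕ) - m, hidx i hi⟩ : E) := fun i hi => dif_neg hi
  have hto : Orthonormal ℂ t := by
    rw [orthonormal_iff_ite]
    intro i j
    by_cases hi : (i : ℕ) < m <;> by_cases hj : (j : ℕ) < m
    · rw [htw i hi, htw j hj,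
        orthonormal_iff_ite.mp hwo ⟨i, lt_of_lt_of_le hi (min_le_left b f)⟩
          ⟨j, lt_of_lt_of_le hj (min_le_left b f)⟩]
      simp [Fin.ext_iff]
    · rw [htw i hi, htk j hj,
        Submodule.inner_left_of_mem_orthogonal (k _).2 (w _).2]
      have : i ≠ j := by intro e; rw [e] at hi; exact hj hi
      simp [this]
    · rw [htk i hi, htw j hj,
        Submodule.inner_right_of_mem_orthogonal (k _).2 (w _).2]
      have : i ≠ j := by intro e; rw [e] at hi; exact hi hj
      simp [this]
    · rw [htk i hi, htk j hj,
        orthonormal_iff_ite.mp hko ⟨(i:ℕ) - m, hidx i hi⟩ ⟨(j:ℕ) - m, hidx j hj⟩]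
      have : ((i:ℕ) - m = (j:ℕ) - m) ↔ i = j := by rw [Fin.ext_iff]; omega
      simp only [Fin.mk.injEq, this]
  -- build the isometry
  set L₀ : F →ₗ[ℂ] E := v.toBasis.constr ℂ t with hL₀
  have hL₀v : ∀ i, L₀ (v i) = t i := by
    intro i
    rw [show v i = v.toBasis i by rw [v.coe_toBasis]]
    exact v.toBasis.constr_basis ℂ t i
  have hvo : Orthonormal ℂ ⇑v.toBasis := by rw [v.coe_toBasis]; exact v.orthonormal
  have hL₀o : Orthonormal ℂ (⇑L₀ ∘ ⇑v.toBasis) := by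
    have he : (⇑L₀ ∘ ⇑v.toBasis) = t := by
      funext i
      simp only [Function.comp_apply]
      exact v.toBasis.constr_basis ℂ t i
    rw [he]; exact hto
  set L : F →ₗᵢ[ℂ] E := L₀.isometryOfOrthonormal hvo hL₀o with hL
  set U : E →ₗᵢ[ℂ] E := L.extend with hU
  set u : E →ₗ[ℂ] E := U.toLinearMap with hu
  have hUv : ∀ i : Fin f, u ((v i : E)) = t i := by
    intro i
    have h1 : U ((v i : E)) = L (v i) := L.extend_apply (v i)
    have h2 : L (v i) = L₀ (v i) := by
      rw [hL, LinearMap.coe_isometryOfOrthonormal]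
    show U ((v i : E)) = t i
    rw [h1, h2, hL₀v]
  refine ⟨u, ?_, ?_⟩
  · ext x
    refine ext_inner_right ℂ fun y => ?_
    rw [LinearMap.comp_apply, LinearMap.adjoint_inner_left]
    exact U.inner_map_map x y
  · have hrange : LinearMap.range (g ∘ₗ (u ∘ₗ h)) =
        Submodule.map g (Submodule.map u F) := by
      rw [LinearMap.range_comp, LinearMap.range_comp, hF]
    have hFspan : F = Submodule.span ℂ (Set.range (fun i => (v i : E))) := by
      conv_lhs => rw [← Submodule.map_subtype_top F, ← v.toBasis.span_eq]
      rw [Submodule.map_span, ← Set.range_comp]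
      congr 1
    have hspan2 : Submodule.map g (Submodule.map u F) =
        Submodule.span ℂ (Set.range (fun i => g (u ((v i : E))))) := by
      conv_lhs => rw [hFspan]
      rw [Submodule.map_span, Submodule.map_span, ← Set.range_comp,
        ← Set.range_comp]
      rfl
    have hretarget : (fun i => g (u ((v i : E)))) = fun i => g (t i) :=
      funext fun i => by rw [hUv]
    set s' : Fin m → W :=
      fun j => g ((w (Fin.castLE (min_le_left b f) j) : E)) with hs'
    have hspan3 : Submodule.span ℂ (Set.range fun i => g (t i)) =
        Submodule.span ℂ (Set.range s') := by
      apply le_antisymm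
      · rw [Submodule.span_le]
        rintro x ⟨i, rfl⟩
        dsimp only
        by_cases hi : (i : ℕ) < m
        · apply Submodule.subset_span
          refine ⟨⟨i, hi⟩, ?_⟩
          rw [htw i hi]
          rfl
        · rw [htk i hi]
          have hmem : ((k ⟨(i:ℕ) - m, hidx i hi⟩ : E)) ∈ LinearMap.ker g := (k _).2
          have hmem' : g ((k ⟨(i:ℕ) - m, hidx i hi⟩ : E)) = 0 := LinearMap.mem_ker.mp hmem
          rw [hmem']
          exact Submodule.zero_mem _
      · rw [Submodule.span_le]
        rintro x ⟨j, rfl⟩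
        apply Submodule.subset_span
        refine ⟨⟨j, lt_of_lt_of_le j.isLt (min_le_right b f)⟩, ?_⟩
        dsimp only
        rw [htw ⟨j, lt_of_lt_of_le j.isLt (min_le_right b f)⟩ j.isLt]
        rfl
    have hli : LinearIndependent ℂ s' := by
      have h1 : Orthonormal ℂ (fun j : Fin m => (w (Fin.castLE (min_le_left b f) j) : E)) :=
        hwo.comp _ (Fin.castLE_injective _)
      have hdisj : Disjoint
          (Submodule.span ℂ (Set.range fun j : Fin m => (w (Fin.castLE (min_le_left b f) j) : E)))
          (LinearMap.ker g) := by
        refine Disjoint.mono_left ?_ (Submodule.orthogonal_disjoint K).symm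
        rw [Submodule.span_le]
        rintro x ⟨j, rfl⟩
        exact (w _).2
      exact h1.linearIndependent.map hdisj
    calc finrank ℂ (LinearMap.range (g ∘ₗ (u ∘ₗ h)))
        = finrank ℂ (Submodule.span ℂ (Set.range s')) := by
          rw [hrange, hspan2, hretarget, hspan3]
      _ = m := by rw [finrank_span_eq_card hli, Fintype.card_fin]
      _ = min (finrank ℂ (LinearMap.range g)) (finrank ℂ (LinearMap.range h)) := by
          rw [hb]

theorem stmt1 {N_R N_S N_T : ℕ}
    (H_B : Matrix (Fin N_R) (Fin N_S) ℂ) (H_F : Matrix (Fin N_S) (Fin N_T) ℂ) :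
    ∃ Θ : Matrix (Fin N_S) (Fin N_S) ℂ, Θᴴ * Θ = 1 ∧
      (H_B * Θ * H_F).rank = min H_B.rank H_F.rank := by
  classical
  have hrankB : ∀ (a a' : ℕ) (M : Matrix (Fin a) (Fin a') ℂ),
      M.rank = finrank ℂ (LinearMap.range (Matrix.toEuclideanLin M)) := by
    intro a a' M
    rw [Matrix.rank_eq_finrank_range_toLin M (EuclideanSpace.basisFun (Fin a) ℂ).toBasis
      (EuclideanSpace.basisFun (Fin a') ℂ).toBasis, Matrix.toEuclideanLin_eq_toLin_orthonormal]
  obtain ⟨u, hadj, hrank⟩ := stmt1_aux (Matrix.toEuclideanLin H_B) (Matrix.toEuclideanLin H_F)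
  set Θ : Matrix (Fin N_S) (Fin N_S) ℂ := Matrix.toEuclideanLin.symm u with hΘ
  have hΘu : Matrix.toEuclideanLin Θ = u := Matrix.toEuclideanLin.apply_symm_apply u
  refine ⟨Θ, ?_, ?_⟩
  · apply Matrix.toEuclideanLin.injective
    have h1 : Matrix.toEuclideanLin (Θᴴ * Θ) =
        Matrix.toEuclideanLin Θᴴ ∘ₗ Matrix.toEuclideanLin Θ := by
      rw [Matrix.toEuclideanLin_eq_toLin_orthonormal,
        Matrix.toLin_mul (EuclideanSpace.basisFun (Fin N_S) ℂ).toBasis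
          (EuclideanSpace.basisFun (Fin N_S) ℂ).toBasis
          (EuclideanSpace.basisFun (Fin N_S) ℂ).toBasis]
    rw [h1, Matrix.toEuclideanLin_conjTranspose_eq_adjoint, hΘu, hadj]
    rw [Matrix.toEuclideanLin_eq_toLin_orthonormal, Matrix.toLin_one]
  · have hmul2 : Matrix.toEuclideanLin (H_B * Θ * H_F) =
        Matrix.toEuclideanLin H_B ∘ₗ (u ∘ₗ Matrix.toEuclideanLin H_F) := by
      rw [Matrix.toEuclideanLin_eq_toLin_orthonormal,
        Matrix.toLin_mul (EuclideanSpace.basisFun (Fin N_T) ℂ).toBasis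
          (EuclideanSpace.basisFun (Fin N_S) ℂ).toBasis
          (EuclideanSpace.basisFun (Fin N_R) ℂ).toBasis,
        Matrix.toLin_mul (EuclideanSpace.basisFun (Fin N_S) ℂ).toBasis
          (EuclideanSpace.basisFun (Fin N_S) ℂ).toBasis
          (EuclideanSpace.basisFun (Fin N_R) ℂ).toBasis,
        ]
      simp only [← Matrix.toEuclideanLin_eq_toLin_orthonormal]
      rw [hΘu, LinearMap.comp_assoc]
    rw [hrankB, hrankB, hrankB, hmul2, hrank]
end

section
/- There exists a unitary matrix Θ ∈ ℂ^{N_S×N_S} such that rank(H_B·Θ·H_F) = max(rank(H_B) + rank(H_F) − N_S, 0). -/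
/-!
The rank of `H_B * Θ * H_F` is `dim Θ(range H_F) - dim (Θ(range H_F) ⊓ ker H_B)`. Any two
subspaces can be made nested by an isometry, and once `Θ(range H_F)` and `ker H_B` are nested the
intersection is the smaller of the two, of dimension `min (rank H_F) (N_S - rank H_B)`.
-/

open Matrix Module Submodule LinearMap

theorem Submodule.exists_le_finrank_eq {K V : Type*} [DivisionRing K] [AddCommGroup V]
    [Module K V] (W : Submodule K V) {k : ℕ} (hk : k ≤ finrank K W) :
    ∃ W' ≤ W, finrank K W' = k := by
  obtain ⟨v, hv⟩ := exists_linearIndependent_of_le_finrank hk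
  refine ⟨span K (Set.range (W.subtype ∘ v)), span_le.2 ?_, ?_⟩
  · rintro _ ⟨i, rfl⟩
    exact (v i).2
  · rw [finrank_span_eq_card (hv.map' W.subtype W.ker_subtype), Fintype.card_fin]

theorem LinearMap.finrank_map_add_finrank_ker_inf {K M M' : Type*} [DivisionRing K]
    [AddCommGroup M] [Module K M] [FiniteDimensional K M] [AddCommGroup M'] [Module K M']
    (f : M →ₗ[K] M') (W : Submodule K M) :
    finrank K (W.map f) + finrank K (ker f ⊓ W : Submodule K M) = finrank K W := by
  have h := finrank_range_add_finrank_ker (f.domRestrict W)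
  rwa [range_domRestrict, ker_domRestrict, show comap W.subtype (ker f)
      = comap W.subtype (ker f ⊓ W) by simp [comap_inf, comap_subtype_self],
    (comapSubtypeEquivOfLe (inf_le_right : ker f ⊓ W ≤ W)).finrank_eq] at h

theorem LinearMap.finrank_map_of_le_ker_or_ker_le {K M M' : Type*} [DivisionRing K]
    [AddCommGroup M] [Module K M] [FiniteDimensional K M] [AddCommGroup M'] [Module K M']
    (f : M →ₗ[K] M') {W : Submodule K M} (hW : W ≤ ker f ∨ ker f ≤ W) :
    finrank K (W.map f) = finrank K W - finrank K (ker f) := by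
  -- when `W ≤ ker f` both sides vanish, the right one by truncated subtraction
  have h := f.finrank_map_add_finrank_ker_inf W
  rcases hW with hW | hW
  · have := Submodule.finrank_mono hW
    rw [inf_eq_right.2 hW] at h
    omega
  · rw [inf_eq_left.2 hW] at h
    omega

section InnerProductSpace

variable {𝕜 E : Type*} [RCLike 𝕜] [NormedAddCommGroup E] [InnerProductSpace 𝕜 E]
  [FiniteDimensional 𝕜 E]

theorem Submodule.exists_linearIsometryEquiv_map_le {U V : Submodule 𝕜 E}
    (h : finrank 𝕜 U ≤ finrank 𝕜 V) :
    ∃ g : E ≃ₗᵢ[𝕜] E, U.map g.toLinearEquiv.toLinearMap ≤ V := by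
  -- an isometry of `U` onto some `W ≤ V` extends to all of `E`
  obtain ⟨W, hWV, hW⟩ := V.exists_le_finrank_eq h
  let e : U ≃ₗᵢ[𝕜] W := (stdOrthonormalBasis 𝕜 U).repr.trans
    ((stdOrthonormalBasis 𝕜 W).reindex (finCongr hW)).repr.symm
  let g := (W.subtypeₗᵢ.comp e.toLinearIsometry).extend.toLinearIsometryEquiv rfl
  refine ⟨g, map_le_iff_le_comap.2 fun u hu => hWV ?_⟩
  change g u ∈ W
  rw [show g u = e ⟨u, hu⟩ from LinearIsometry.extend_apply _ ⟨u, hu⟩]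
  exact (e _).2

theorem Submodule.exists_linearIsometryEquiv_map_le_or_le (U V : Submodule 𝕜 E) :
    ∃ g : E ≃ₗᵢ[𝕜] E,
      U.map g.toLinearEquiv.toLinearMap ≤ V ∨ V ≤ U.map g.toLinearEquiv.toLinearMap := by
  rcases le_total (finrank 𝕜 U) (finrank 𝕜 V) with h | h
  · obtain ⟨g, hg⟩ := exists_linearIsometryEquiv_map_le h
    exact ⟨g, .inl hg⟩
  · obtain ⟨g, hg⟩ := exists_linearIsometryEquiv_map_le h
    exact ⟨g.symm, .inr fun v hv => ⟨g v, hg ⟨v, hv, rfl⟩, g.symm_apply_apply v⟩⟩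

end InnerProductSpace

section Matrix

variable {𝕜 m n : Type*} [RCLike 𝕜] [Fintype m] [Fintype n] [DecidableEq n]

theorem Matrix.rank_eq_finrank_range_toEuclideanLin (A : Matrix m n 𝕜) :
    A.rank = finrank 𝕜 (range (toEuclideanLin A)) := by
  rw [toEuclideanLin_eq_toLin_orthonormal]
  exact A.rank_eq_finrank_range_toLin _ _

theorem LinearIsometryEquiv.toEuclideanLin_symm_mem_unitaryGroup
    (g : EuclideanSpace 𝕜 n ≃ₗᵢ[𝕜] EuclideanSpace 𝕜 n) :
    toEuclideanLin.symm g.toLinearEquiv.toLinearMap ∈ unitaryGroup n 𝕜 := by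
  rw [toEuclideanLin_eq_toLin_orthonormal]
  exact g.toMatrix_mem_unitaryGroup _ _

end Matrix

theorem stmt2 {N_R N_S N_T : ℕ}
    (H_B : Matrix (Fin N_R) (Fin N_S) ℂ) (H_F : Matrix (Fin N_S) (Fin N_T) ℂ) :
    ∃ Θ : Matrix (Fin N_S) (Fin N_S) ℂ, Θᴴ * Θ = 1 ∧
      (H_B * Θ * H_F).rank = H_B.rank + H_F.rank - N_S := by
  set f := toEuclideanLin H_B
  set R := range (toEuclideanLin H_F)
  obtain ⟨g, hg⟩ := R.exists_linearIsometryEquiv_map_le_or_le (ker f)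
  have hker : finrank ℂ (ker f) = N_S - H_B.rank := by
    have := finrank_range_add_finrank_ker f
    rw [← rank_eq_finrank_range_toEuclideanLin, finrank_euclideanSpace_fin] at this
    omega
  set W := R.map g.toLinearEquiv.toLinearMap
  have hW : finrank ℂ W = H_F.rank := by
    rw [rank_eq_finrank_range_toEuclideanLin]
    exact g.toLinearEquiv.finrank_map_eq R
  refine ⟨_, mem_unitaryGroup_iff'.1 g.toEuclideanLin_symm_mem_unitaryGroup, ?_⟩
  calc _ = finrank ℂ (W.map f) := by
        rw [rank_eq_finrank_range_toEuclideanLin, toLpLin_mul_same, toLpLin_mul_same,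
          LinearEquiv.apply_symm_apply, range_comp, map_comp]
    _ = H_F.rank - (N_S - H_B.rank) := by rw [f.finrank_map_of_le_ker_or_ker_le hg, hW, hker]
    _ = H_B.rank + H_F.rank - N_S := by have := H_B.rank_le_width; omega
end

section
/- Let Y ∈ ℂ^{m×m} be Hermitian and Z ∈ ℂ^{m×k} be any complex matrix. Then for every n with 1 ≤ n ≤ m, λ_n(Y + Z·Zᴴ) ≥ λ_n(Y), and for every n with k < n ≤ m, λ_n(Y + Z·Zᴴ) ≤ λ_{n−k}(Y). -/
open Matrix

noncomputable def nthLargest {m : ℕ} (f : Fin m → ℝ) (n : ℕ) : ℝ :=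
  if h : 1 ≤ n ∧ n ≤ m then (f ∘ Tuple.sort f) ⟨m - n, by omega⟩ else 0

noncomputable def nthEig {m : ℕ} (Y : Matrix (Fin m) (Fin m) ℂ) (hY : Y.IsHermitian) (n : ℕ) : ℝ :=
  nthLargest hY.eigenvalues n

/-- The `n`-th largest singular value (1-based) of a complex matrix, equal to the square root
of the `n`-th largest eigenvalue of `A * Aᴴ`, with the convention that it is `0` whenever
`n` exceeds the matrix dimensions. -/
noncomputable def singVal {r c : ℕ} (A : Matrix (Fin r) (Fin c) ℂ) (n : ℕ) : ℝ :=
  Real.sqrt (nthLargest (Matrix.isHermitian_mul_conjTranspose_self A).eigenvalues n)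

/-! Courant–Fischer by dimension counting. The top `n` eigenvectors of a Hermitian `A` span an
`n`-dimensional space on which `re ⟪x, A x⟫ ≥ λₙ(A) ‖x‖²`; the bottom `m - j + 1` eigenvectors
of `B` span one on which `re ⟪x, B x⟫ ≤ λⱼ(B) ‖x‖²`. If the form of `A` is at most that of `B` on
a subspace of codimension `d`, then for `j = n - d` the three subspaces meet in some `x ≠ 0`, so
`λₙ(A) ≤ λₙ₋d(B)`. Adding `Z Zᴴ` raises the form by `‖Zᴴ x‖²`, which is nonnegative and vanishes
on `ker Zᴴ`, of codimension at most `k`; take `d = 0` and `d = k`. -/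

open Module Submodule Finset
open scoped InnerProductSpace

noncomputable def quadForm {𝕜 n : Type*} [RCLike 𝕜] [Fintype n] [DecidableEq n]
    (A : Matrix n n 𝕜) (x : EuclideanSpace 𝕜 n) : ℝ :=
  RCLike.re ⟪x, A.toEuclideanLin x⟫_𝕜

lemma Orthonormal.inner_eq_zero_of_mem_span_image {𝕜 E ι : Type*} [RCLike 𝕜]
    [NormedAddCommGroup E] [InnerProductSpace 𝕜 E] {v : ι → E} (hv : Orthonormal 𝕜 v)
    {s : Set ι} {i : ι} (hi : i ∉ s) {x : E} (hx : x ∈ span 𝕜 (v '' s)) : ⟪v i, x⟫_𝕜 = 0 := by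
  refine mem_orthogonal_singleton_iff_inner_right.1 (span_le.2 ?_ hx)
  rintro _ ⟨j, hj, rfl⟩
  exact mem_orthogonal_singleton_iff_inner_right.2
    (hv.inner_eq_zero (ne_of_mem_of_not_mem hj hi).symm)

lemma LinearIndependent.finrank_span_image_finset {R M ι : Type*} [Ring R] [StrongRankCondition R]
    [AddCommGroup M] [Module R M] {v : ι → M} (hv : LinearIndependent R v) (s : Finset ι) :
    finrank R (span R (v '' s)) = s.card := by
  have := nontrivial_of_invariantBasisNumber R
  rw [Set.image_eq_range]
  exact (finrank_span_eq_card (hv.comp ((↑) : s → ι) Subtype.val_injective)).trans (by simp)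

lemma Submodule.finrank_add_finrank_le_finrank_add_finrank_inf {K V : Type*} [DivisionRing K]
    [AddCommGroup V] [Module K V] [FiniteDimensional K V] (U W : Submodule K V) :
    finrank K U + finrank K W ≤ finrank K V + finrank K ↥(U ⊓ W) := by
  rw [← finrank_sup_add_finrank_inf_eq]
  exact Nat.add_le_add_right (finrank_le _) _

lemma LinearMap.finrank_le_finrank_add_finrank_ker {K V W : Type*} [DivisionRing K]
    [AddCommGroup V] [Module K V] [AddCommGroup W] [Module K W] [FiniteDimensional K V]
    [FiniteDimensional K W] (f : V →ₗ[K] W) :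
    finrank K V ≤ finrank K W + finrank K (ker f) := by
  rw [← f.finrank_range_add_finrank_ker]
  exact Nat.add_le_add_right (Submodule.finrank_le _) _

section QuadForm

variable {𝕜 n : Type*} [RCLike 𝕜] [Fintype n] [DecidableEq n]

lemma quadForm_add (A B : Matrix n n 𝕜) (x : EuclideanSpace 𝕜 n) :
    quadForm (A + B) x = quadForm A x + quadForm B x := by
  simp only [quadForm, map_add, LinearMap.add_apply, inner_add_right]

lemma quadForm_mul_conjTranspose_self {k : Type*} [Fintype k] [DecidableEq k]
    (Z : Matrix n k 𝕜) (x : EuclideanSpace 𝕜 n) :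
    quadForm (Z * Zᴴ) x = ‖Zᴴ.toEuclideanLin x‖ ^ 2 := by
  rw [quadForm, Matrix.toLpLin_mul_same, LinearMap.comp_apply,
    Matrix.toEuclideanLin_conjTranspose_eq_adjoint, ← LinearMap.adjoint_inner_left,
    inner_self_eq_norm_sq]

lemma Matrix.IsHermitian.toEuclideanLin_eigenvectorBasis {A : Matrix n n 𝕜} (hA : A.IsHermitian)
    (i : n) : A.toEuclideanLin (hA.eigenvectorBasis i) =
      (hA.eigenvalues i : 𝕜) • hA.eigenvectorBasis i := by
  simpa only [IsHermitian.eigenvectorBasis, IsHermitian.eigenvalues, IsHermitian.eigenvalues₀,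
    OrthonormalBasis.reindex_apply] using
    (isSymmetric_toEuclideanLin_iff.mpr hA).apply_eigenvectorBasis _ _

lemma Matrix.IsHermitian.inner_eigenvectorBasis_toEuclideanLin {A : Matrix n n 𝕜} (hA : A.IsHermitian)
    (i : n) (x : EuclideanSpace 𝕜 n) :
    ⟪hA.eigenvectorBasis i, A.toEuclideanLin x⟫_𝕜 =
      hA.eigenvalues i * ⟪hA.eigenvectorBasis i, x⟫_𝕜 := by
  rw [← isSymmetric_toEuclideanLin_iff.mpr hA, hA.toEuclideanLin_eigenvectorBasis,
    inner_smul_left, RCLike.conj_ofReal]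

lemma Matrix.IsHermitian.quadForm_eq_sum {A : Matrix n n 𝕜} (hA : A.IsHermitian) (x : EuclideanSpace 𝕜 n) :
    quadForm A x = ∑ i, hA.eigenvalues i * ‖⟪hA.eigenvectorBasis i, x⟫_𝕜‖ ^ 2 := by
  rw [quadForm, ← hA.eigenvectorBasis.sum_inner_mul_inner, map_sum]
  refine sum_congr rfl fun i _ => ?_
  rw [hA.inner_eigenvectorBasis_toEuclideanLin, mul_left_comm, RCLike.re_ofReal_mul,
    inner_mul_symm_re_eq_norm, ← inner_conj_symm x, norm_mul, RCLike.norm_conj, sq]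

lemma Matrix.IsHermitian.mul_norm_sq_le_quadForm {A : Matrix n n 𝕜} (hA : A.IsHermitian)
    {s : Set n} {c : ℝ} (hc : ∀ i ∈ s, c ≤ hA.eigenvalues i) {x : EuclideanSpace 𝕜 n}
    (hx : x ∈ span 𝕜 (hA.eigenvectorBasis '' s)) : c * ‖x‖ ^ 2 ≤ quadForm A x := by
  rw [hA.quadForm_eq_sum, ← hA.eigenvectorBasis.sum_sq_norm_inner_right x, mul_sum]
  refine sum_le_sum fun i _ => ?_
  by_cases hi : i ∈ s
  · exact mul_le_mul_of_nonneg_right (hc i hi) (by positivity)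
  · simp [hA.eigenvectorBasis.orthonormal.inner_eq_zero_of_mem_span_image hi hx]

lemma Matrix.IsHermitian.quadForm_le_mul_norm_sq {A : Matrix n n 𝕜} (hA : A.IsHermitian)
    {s : Set n} {c : ℝ} (hc : ∀ i ∈ s, hA.eigenvalues i ≤ c) {x : EuclideanSpace 𝕜 n}
    (hx : x ∈ span 𝕜 (hA.eigenvectorBasis '' s)) : quadForm A x ≤ c * ‖x‖ ^ 2 := by
  rw [hA.quadForm_eq_sum, ← hA.eigenvectorBasis.sum_sq_norm_inner_right x, mul_sum]
  refine sum_le_sum fun i _ => ?_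
  by_cases hi : i ∈ s
  · exact mul_le_mul_of_nonneg_right (hc i hi) (by positivity)
  · simp [hA.eigenvectorBasis.orthonormal.inner_eq_zero_of_mem_span_image hi hx]

end QuadForm

lemma exists_card_eq_forall_nthLargest_le {m n : ℕ} (f : Fin m → ℝ) (h1 : 1 ≤ n) (h2 : n ≤ m) :
    ∃ s : Finset (Fin m), s.card = n ∧ ∀ i ∈ s, nthLargest f n ≤ f i := by
  refine ⟨(Ici ⟨m - n, by omega⟩).map (Tuple.sort f).toEmbedding, by simp; omega, ?_⟩
  simp only [mem_map, mem_Ici, Equiv.coe_toEmbedding, forall_exists_index, and_imp]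
  rintro _ j hj rfl
  rw [nthLargest, dif_pos ⟨h1, h2⟩]
  exact Tuple.monotone_sort f hj

lemma exists_card_eq_forall_le_nthLargest {m n : ℕ} (f : Fin m → ℝ) (h1 : 1 ≤ n) (h2 : n ≤ m) :
    ∃ s : Finset (Fin m), s.card = m - n + 1 ∧ ∀ i ∈ s, f i ≤ nthLargest f n := by
  refine ⟨(Iic ⟨m - n, by omega⟩).map (Tuple.sort f).toEmbedding, by simp, ?_⟩
  simp only [mem_map, mem_Iic, Equiv.coe_toEmbedding, forall_exists_index, and_imp]
  rintro _ j hj rfl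
  rw [nthLargest, dif_pos ⟨h1, h2⟩]
  exact Tuple.monotone_sort f hj

section NthEig

variable {m : ℕ} {A : Matrix (Fin m) (Fin m) ℂ}

lemma Matrix.IsHermitian.exists_finrank_eq_nthEig_mul_norm_sq_le (hA : A.IsHermitian) {n : ℕ}
    (h1 : 1 ≤ n) (h2 : n ≤ m) :
    ∃ V : Submodule ℂ (EuclideanSpace ℂ (Fin m)), finrank ℂ V = n ∧
      ∀ x ∈ V, nthEig A hA n * ‖x‖ ^ 2 ≤ quadForm A x := by
  obtain ⟨s, hs, hle⟩ := exists_card_eq_forall_nthLargest_le hA.eigenvalues h1 h2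
  refine ⟨span ℂ (hA.eigenvectorBasis '' s), ?_, fun x hx => hA.mul_norm_sq_le_quadForm hle hx⟩
  rw [hA.eigenvectorBasis.orthonormal.linearIndependent.finrank_span_image_finset, hs]

lemma Matrix.IsHermitian.exists_finrank_eq_quadForm_le_nthEig_mul_norm_sq (hA : A.IsHermitian)
    {n : ℕ} (h1 : 1 ≤ n) (h2 : n ≤ m) :
    ∃ V : Submodule ℂ (EuclideanSpace ℂ (Fin m)), finrank ℂ V = m - n + 1 ∧
      ∀ x ∈ V, quadForm A x ≤ nthEig A hA n * ‖x‖ ^ 2 := by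
  obtain ⟨s, hs, hle⟩ := exists_card_eq_forall_le_nthLargest hA.eigenvalues h1 h2
  refine ⟨span ℂ (hA.eigenvectorBasis '' s), ?_, fun x hx => hA.quadForm_le_mul_norm_sq hle hx⟩
  rw [hA.eigenvectorBasis.orthonormal.linearIndependent.finrank_span_image_finset, hs]

theorem nthEig_le_nthEig_sub_of_quadForm_le {B : Matrix (Fin m) (Fin m) ℂ} (hA : A.IsHermitian)
    (hB : B.IsHermitian) {d : ℕ} (K : Submodule ℂ (EuclideanSpace ℂ (Fin m)))
    (hK : m ≤ d + finrank ℂ K) (hAB : ∀ x ∈ K, quadForm A x ≤ quadForm B x) {n : ℕ}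
    (h1 : d < n) (h2 : n ≤ m) :
    nthEig A hA n ≤ nthEig B hB (n - d) := by
  obtain ⟨V, hV, hAV⟩ := hA.exists_finrank_eq_nthEig_mul_norm_sq_le (by omega) h2
  obtain ⟨U, hU, hBU⟩ :=
    hB.exists_finrank_eq_quadForm_le_nthEig_mul_norm_sq (n := n - d) (by omega) (by omega)
  have hVU := finrank_add_finrank_le_finrank_add_finrank_inf V U
  have hVUK := finrank_add_finrank_le_finrank_add_finrank_inf (V ⊓ U) K
  rw [finrank_euclideanSpace_fin] at hVU hVUK
  obtain ⟨x, ⟨⟨hxV, hxU⟩, hxK⟩, hx0⟩ := (V ⊓ U ⊓ K).ne_bot_iff.1 fun h => by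
    rw [h, finrank_bot] at hVUK
    omega
  refine le_of_mul_le_mul_right ?_ (pow_pos (norm_pos_iff.2 hx0) 2)
  calc nthEig A hA n * ‖x‖ ^ 2 ≤ quadForm A x := hAV x hxV
    _ ≤ quadForm B x := hAB x hxK
    _ ≤ nthEig B hB (n - d) * ‖x‖ ^ 2 := hBU x hxU

end NthEig

theorem stmt3 {m k : ℕ}
    (Y : Matrix (Fin m) (Fin m) ℂ) (hY : Y.IsHermitian)
    (Z : Matrix (Fin m) (Fin k) ℂ) :
    (∀ n : ℕ, 1 ≤ n → n ≤ m →
      nthEig Y hY n ≤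
        nthEig (Y + Z * Zᴴ) (hY.add (Matrix.isHermitian_mul_conjTranspose_self Z)) n) ∧
    (∀ n : ℕ, k < n → n ≤ m →
      nthEig (Y + Z * Zᴴ) (hY.add (Matrix.isHermitian_mul_conjTranspose_self Z)) n ≤
        nthEig Y hY (n - k)) := by
  have hB := hY.add (Matrix.isHermitian_mul_conjTranspose_self Z)
  have hquad (x : EuclideanSpace ℂ (Fin m)) :
      quadForm (Y + Z * Zᴴ) x = quadForm Y x + ‖Zᴴ.toEuclideanLin x‖ ^ 2 := by
    rw [quadForm_add, quadForm_mul_conjTranspose_self]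
  refine ⟨fun n h1 h2 => ?_, fun n h1 h2 => ?_⟩
  · refine nthEig_le_nthEig_sub_of_quadForm_le hY hB (d := 0) ⊤ (by simp) (fun x _ => ?_) h1 h2
    rw [hquad]
    exact le_add_of_nonneg_right (sq_nonneg _)
  · have hker := Zᴴ.toEuclideanLin.finrank_le_finrank_add_finrank_ker
    simp only [finrank_euclideanSpace_fin] at hker
    refine nthEig_le_nthEig_sub_of_quadForm_le hB hY _ hker (fun x hx => ?_) h1 h2
    rw [hquad, LinearMap.mem_ker.1 hx, norm_zero, zero_pow two_ne_zero, add_zero]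
end

section
/- Suppose N_T = N_S = N_R = m (square case). Then for every unitary matrix Θ ∈ ℂ^{m×m} and every k with 1 ≤ k ≤ m, the product of the k smallest singular values of H_B·Θ·H_F is bounded below by the corresponding product for the factors: ∏_{n=m−k+1}^{m} σ_n(H_B·Θ·H_F) ≥ ∏_{n=m−k+1}^{m} σ_n(H_B)·σ_n(H_F). -/
/-!
Squaring, it suffices that the product of the `k` smallest eigenvalues of `A Aᴴ`, `A = H_B Θ H_F`,
is at least the product of the corresponding quantities for `H_B H_Bᴴ` and `H_F H_Fᴴ`. Let `Q` be
an `m × k` isometry onto eigenvectors for the `k` smallest eigenvalues of `A Aᴴ`, so that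
`det (Qᴴ A Aᴴ Q)` is exactly that product. The key inequality is
`λ_min,k(W) · det (Mᴴ M) ≤ det (Mᴴ W M)` for positive semidefinite `W` and any `m × k` matrix
`M`: after diagonalising `W = U D Uᴴ`, Cauchy–Binet writes `det (Nᴴ D N)` as the sum over
`k`-subsets `S` of `(∏_{i ∈ S} d_i) |det N_S|²`, and each `∏_{i ∈ S} d_i` is at least the product
of the `k` smallest `d_i`. Applying it to `W = H_F H_Fᴴ`, `M = Θᴴ H_Bᴴ Q` and then to
`W = H_B H_Bᴴ`, `M = Q` gives the claim, since `Θ` is unitary.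
-/

open Matrix

open Finset Function Equiv
open scoped ComplexOrder

section CauchyBinet

variable {R : Type*} [CommRing R] {k : ℕ} {m : Type*}

lemma det_mul_eq_sum_det_submatrix_mul_prod {n : Type*} [Fintype n] [DecidableEq n] [Fintype m]
    (A : Matrix n m R) (B : Matrix m n R) :
    det (A * B) = ∑ p : n → m, det (A.submatrix id p) * ∏ i, B (p i) i := by
  simp only [det_apply', mul_apply, prod_univ_sum, mul_sum, sum_mul, Fintype.piFinset_univ,
    prod_mul_distrib, submatrix_apply, id, mul_assoc]
  exact sum_comm

variable [LinearOrder m]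

lemma exists_orderEmbedding_comp_perm_eq {p : Fin k → m} (hp : Injective p) :
    ∃ (f : Fin k ↪o m) (σ : Perm (Fin k)), ⇑f ∘ σ = p := by
  have hcard : (univ.image p).card = k := by simp [card_image_of_injective _ hp]
  set e := (univ.image p).orderIsoOfFin hcard
  have hσ : Injective fun i => e.symm ⟨p i, by simp⟩ := fun i j hij => hp <| by
    simpa using congrArg Subtype.val (e.symm.injective hij)
  refine ⟨(univ.image p).orderEmbOfFin hcard, ofBijective _ (Finite.injective_iff_bijective.mp hσ),
    funext fun i => ?_⟩
  simp [← coe_orderIsoOfFin_apply, e]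

lemma orderEmbedding_comp_perm_injective :
    Injective fun x : (Fin k ↪o m) × Perm (Fin k) => ⇑x.1 ∘ x.2 := by
  rintro ⟨f, σ⟩ ⟨g, τ⟩ h
  have hfg : f = g := by
    rw [← OrderEmbedding.range_inj]
    simpa [Set.range_comp] using congrArg Set.range h
  subst hfg
  exact Prod.ext rfl (Equiv.ext fun i => f.injective (congrFun h i))

theorem det_mul_eq_sum_det_submatrix_mul_det_submatrix [Fintype m] (A : Matrix (Fin k) m R)
    (B : Matrix m (Fin k) R) :
    det (A * B) = ∑ f : Fin k ↪o m, det (A.submatrix id f) * det (B.submatrix f id) := by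
  rw [det_mul_eq_sum_det_submatrix_mul_prod]
  symm
  calc ∑ f : Fin k ↪o m, det (A.submatrix id f) * det (B.submatrix f id)
      = ∑ x : (Fin k ↪o m) × Perm (Fin k),
          det (A.submatrix id (x.1 ∘ x.2)) * ∏ i, B (x.1 (x.2 i)) i := by
        rw [Fintype.sum_prod_type]
        refine sum_congr rfl fun f _ => ?_
        rw [det_apply (B.submatrix f id), mul_sum]
        refine sum_congr rfl fun σ _ => ?_
        have hperm : A.submatrix id (f ∘ σ) = (A.submatrix id f).submatrix id σ := rfl
        rw [hperm, det_permute', Units.smul_def, zsmul_eq_mul]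
        simp only [submatrix_apply, id]
        ring
    _ = _ := by
        -- An injective `p` factors uniquely as `f ∘ σ`; any other `p` gives two equal columns.
        refine sum_of_injOn _ orderEmbedding_comp_perm_injective.injOn
          (fun _ _ => mem_coe.2 (mem_univ _)) (fun p _ hp => ?_) (fun _ _ => rfl)
        have : ¬ Injective p := fun h => hp <| by
          obtain ⟨f, σ, hfσ⟩ := exists_orderEmbedding_comp_perm_eq h
          exact ⟨(f, σ), by simp, hfσ⟩
        obtain ⟨i, j, hij, hne⟩ : ∃ i j, p i = p j ∧ i ≠ j := by simpa [Injective] using this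
        rw [det_zero_of_column_eq hne (fun l => by simp [hij]), zero_mul]

end CauchyBinet

section Gram

variable {k : ℕ} {m : Type*} [Fintype m] [LinearOrder m]

lemma det_conjTranspose_mul_diagonal_mul (N : Matrix m (Fin k) ℂ) (d : m → ℝ) :
    det (Nᴴ * diagonal (fun i => (d i : ℂ)) * N) =
      ((∑ f : Fin k ↪o m, (∏ j, d (f j)) * Complex.normSq (det (N.submatrix f id)) : ℝ) : ℂ) := by
  rw [det_mul_eq_sum_det_submatrix_mul_det_submatrix]
  push_cast
  refine sum_congr rfl fun f _ => ?_
  have hsub : (Nᴴ * diagonal (fun i => (d i : ℂ))).submatrix id f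
      = (N.submatrix f id)ᴴ * diagonal (fun j => (d (f j) : ℂ)) := by
    ext i j
    simp [mul_diagonal]
  rw [hsub, det_mul, det_diagonal, det_conjTranspose, Complex.normSq_eq_conj_mul_self,
    Complex.star_def]
  ring

lemma mul_re_det_le_re_det_conjTranspose_mul_diagonal_mul (N : Matrix m (Fin k) ℂ) (d : m → ℝ)
    {c : ℝ} (hc : ∀ f : Fin k ↪o m, c ≤ ∏ j, d (f j)) :
    c * (det (Nᴴ * N)).re ≤ (det (Nᴴ * diagonal (fun i => (d i : ℂ)) * N)).re := by
  have hone := det_conjTranspose_mul_diagonal_mul N 1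
  simp only [Pi.one_apply, Complex.ofReal_one, diagonal_one, Matrix.mul_one, prod_const_one,
    one_mul] at hone
  rw [hone, det_conjTranspose_mul_diagonal_mul, Complex.ofReal_re, Complex.ofReal_re, mul_sum]
  exact sum_le_sum fun f _ => mul_le_mul_of_nonneg_right (hc f) (Complex.normSq_nonneg _)

end Gram

section SmallestProduct

lemma Finset.prod_le_prod_of_card_eq_of_forall_le {α : Type*} {s t : Finset α} {d : α → ℝ}
    (hd : ∀ i, 0 ≤ d i) (hcard : #t = #s) (hle : ∀ y ∈ t, ∀ x ∈ s, d y ≤ d x) :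
    ∏ y ∈ t, d y ≤ ∏ x ∈ s, d x := by
  rcases t.eq_empty_or_nonempty with rfl | ht
  · simp [card_eq_zero.mp hcard.symm]
  obtain ⟨y₀, hy₀, hmax⟩ := t.exists_max_image d ht
  calc ∏ y ∈ t, d y ≤ ∏ _y ∈ t, d y₀ := prod_le_prod (fun i _ => hd i) hmax
    _ = ∏ _x ∈ s, d y₀ := by rw [prod_const, prod_const, hcard]
    _ ≤ ∏ x ∈ s, d x := prod_le_prod (fun _ _ => hd y₀) (hle y₀ hy₀)

lemma Finset.prod_le_prod_of_card_eq_of_forall_notMem_le {α : Type*} [DecidableEq α]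
    {s t : Finset α} {d : α → ℝ} (hd : ∀ i, 0 ≤ d i) (hcard : #s = #t)
    (hle : ∀ j ∈ t, ∀ i ∉ t, d j ≤ d i) :
    ∏ j ∈ t, d j ≤ ∏ i ∈ s, d i := by
  rw [← prod_inter_mul_prod_sdiff s t, ← prod_inter_mul_prod_sdiff t s, inter_comm]
  refine mul_le_mul_of_nonneg_left ?_ (prod_nonneg fun i _ => hd i)
  exact prod_le_prod_of_card_eq_of_forall_le hd (card_sdiff_comm hcard.symm)
    fun y hy x hx => hle y (mem_sdiff.mp hy).1 x (mem_sdiff.mp hx).2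

variable {m k : ℕ}

lemma nthLargest_nonneg {d : Fin m → ℝ} (hd : ∀ i, 0 ≤ d i) (n : ℕ) : 0 ≤ nthLargest d n := by
  unfold nthLargest
  split
  · exact hd _
  · exact le_rfl

lemma prod_Icc_nthLargest_eq_prod_sort (d : Fin m → ℝ) (hk : k ≤ m) :
    ∏ n ∈ Icc (m - k + 1) m, nthLargest d n =
      ∏ j : Fin k, d (Tuple.sort d (Fin.castLE hk j)) := by
  symm
  refine prod_bij (fun j _ => m - j) (fun j _ => ?_) (fun i _ j _ h => ?_) (fun n hn => ?_)
    (fun j _ => ?_)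
  · have := j.2; simp only [mem_Icc]; omega
  · have := i.2; have := j.2; ext; omega
  · have := mem_Icc.mp hn
    exact ⟨⟨m - n, by omega⟩, mem_univ _, by simp; omega⟩
  · have := j.2
    rw [nthLargest, dif_pos (by omega)]
    congr 2
    ext; simp; omega

lemma sort_castLE_le_of_notMem (d : Fin m → ℝ) (hk : k ≤ m) (j : Fin k) {i : Fin m}
    (hi : i ∉ Set.range (Tuple.sort d ∘ Fin.castLE hk)) :
    d (Tuple.sort d (Fin.castLE hk j)) ≤ d i := by
  have hki : k ≤ (Tuple.sort d).symm i := by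
    by_contra! h
    exact hi ⟨⟨_, h⟩, by simp⟩
  have hji : Fin.castLE hk j < (Tuple.sort d).symm i := Fin.lt_def.mpr (by simp; omega)
  simpa using Tuple.monotone_sort d hji.le

lemma prod_Icc_nthLargest_le_prod_of_injective {d : Fin m → ℝ} (hd : ∀ i, 0 ≤ d i)
    {f : Fin k → Fin m} (hf : Injective f) :
    ∏ n ∈ Icc (m - k + 1) m, nthLargest d n ≤ ∏ j, d (f j) := by
  have hk : k ≤ m := by simpa using Fintype.card_le_of_injective f hf
  let e : Fin k ↪ Fin m :=
    ⟨Tuple.sort d ∘ Fin.castLE hk, (Tuple.sort d).injective.comp (Fin.castLE_injective hk)⟩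
  have h := prod_le_prod_of_card_eq_of_forall_notMem_le hd (s := univ.map ⟨f, hf⟩)
    (t := univ.map e) (by simp) fun j hj i hi => ?_
  · rw [prod_map, prod_map] at h
    rwa [prod_Icc_nthLargest_eq_prod_sort d hk]
  obtain ⟨j, -, rfl⟩ := mem_map.mp hj
  exact sort_castLE_le_of_notMem d hk j fun ⟨j', hj'⟩ => hi (mem_map.mpr ⟨j', mem_univ _, hj'⟩)

end SmallestProduct

section Spectral

variable {m k : ℕ}

lemma mul_re_det_le_re_det_conjTranspose_mul_mul {W : Matrix (Fin m) (Fin m) ℂ}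
    (hW : W.PosSemidef) (M : Matrix (Fin m) (Fin k) ℂ) :
    (∏ n ∈ Icc (m - k + 1) m, nthLargest hW.1.eigenvalues n) * (det (Mᴴ * M)).re ≤
      (det (Mᴴ * W * M)).re := by
  set U : Matrix (Fin m) (Fin m) ℂ := ↑hW.1.eigenvectorUnitary
  have hU : U * Uᴴ = 1 := Unitary.mul_star_self_of_mem hW.1.eigenvectorUnitary.2
  have hWU : W = U * diagonal (fun i => (hW.1.eigenvalues i : ℂ)) * Uᴴ := by
    conv_lhs => rw [hW.1.spectral_theorem]
    rfl
  have h := mul_re_det_le_re_det_conjTranspose_mul_diagonal_mul (Uᴴ * M) hW.1.eigenvalues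
    fun f => prod_Icc_nthLargest_le_prod_of_injective hW.eigenvalues_nonneg f.injective
  have hMM : (Uᴴ * M)ᴴ * (Uᴴ * M) = Mᴴ * M := by
    rw [conjTranspose_mul, conjTranspose_conjTranspose, Matrix.mul_assoc, ← Matrix.mul_assoc U, hU,
      Matrix.one_mul]
  have hMWM :
      (Uᴴ * M)ᴴ * diagonal (fun i => (hW.1.eigenvalues i : ℂ)) * (Uᴴ * M) = Mᴴ * W * M := by
    conv_rhs => rw [hWU]
    simp only [conjTranspose_mul, conjTranspose_conjTranspose, Matrix.mul_assoc]
  rwa [hMM, hMWM] at h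

lemma exists_conjTranspose_mul_self_eq_one_and_det_eq {W : Matrix (Fin m) (Fin m) ℂ}
    (hW : W.IsHermitian) (hk : k ≤ m) :
    ∃ Q : Matrix (Fin m) (Fin k) ℂ, Qᴴ * Q = 1 ∧
      det (Qᴴ * W * Q) = ((∏ n ∈ Icc (m - k + 1) m, nthLargest hW.eigenvalues n : ℝ) : ℂ) := by
  set e : Fin k → Fin m := Tuple.sort hW.eigenvalues ∘ Fin.castLE hk
  have he : Injective e := (Tuple.sort _).injective.comp (Fin.castLE_injective hk)
  set U : Matrix (Fin m) (Fin m) ℂ := ↑hW.eigenvectorUnitary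
  have hU : Uᴴ * U = 1 := Unitary.star_mul_self_of_mem hW.eigenvectorUnitary.2
  have hUWU : Uᴴ * W * U = diagonal (fun i => (hW.eigenvalues i : ℂ)) := by
    have := hW.conjStarAlgAut_star_eigenvectorUnitary
    rwa [Unitary.conjStarAlgAut_star_apply] at this
  have hsub (X : Matrix (Fin m) (Fin m) ℂ) :
      (U.submatrix id e)ᴴ * X * U.submatrix id e = (Uᴴ * X * U).submatrix e e := by
    rw [submatrix_mul _ _ _ id _ bijective_id, submatrix_mul _ _ _ id _ bijective_id,
      submatrix_id_id, conjTranspose_submatrix]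
  refine ⟨U.submatrix id e, ?_, ?_⟩
  · simpa only [Matrix.mul_one, hU, submatrix_one _ he] using hsub 1
  · rw [hsub, hUWU, submatrix_diagonal _ _ he, det_diagonal,
      prod_Icc_nthLargest_eq_prod_sort _ hk]
    push_cast
    rfl

lemma prod_singVal_eq_sqrt_prod_nthLargest {r c : ℕ} (A : Matrix (Fin r) (Fin c) ℂ)
    (s : Finset ℕ) :
    ∏ n ∈ s, singVal A n =
      √(∏ n ∈ s, nthLargest (isHermitian_mul_conjTranspose_self A).eigenvalues n) :=
  (Real.sqrt_prod s fun n _ =>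
    nthLargest_nonneg (eigenvalues_self_mul_conjTranspose_nonneg A) n).symm

end Spectral

theorem stmt8_general {m : ℕ}
    (H_B : Matrix (Fin m) (Fin m) ℂ) (H_F : Matrix (Fin m) (Fin m) ℂ)
    (Θ : Matrix (Fin m) (Fin m) ℂ) (hΘ : Θᴴ * Θ = 1)
    (k : ℕ) (hk2 : k ≤ m) :
    ∏ n ∈ Finset.Icc (m - k + 1) m, singVal H_B n * singVal H_F n ≤
      ∏ n ∈ Finset.Icc (m - k + 1) m, singVal (H_B * Θ * H_F) n := by
  set A := H_B * Θ * H_F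
  obtain ⟨Q, hQ, hQA⟩ :=
    exists_conjTranspose_mul_self_eq_one_and_det_eq (isHermitian_mul_conjTranspose_self A) hk2
  set M := Θᴴ * H_Bᴴ * Q
  have hMM : Mᴴ * M = Qᴴ * (H_B * H_Bᴴ) * Q := by
    simp only [M, conjTranspose_mul, conjTranspose_conjTranspose, Matrix.mul_assoc]
    rw [← Matrix.mul_assoc Θ, mul_eq_one_comm.mp hΘ, Matrix.one_mul]
  have hMFM : Mᴴ * (H_F * H_Fᴴ) * M = Qᴴ * (A * Aᴴ) * Q := by
    simp only [M, A, conjTranspose_mul, conjTranspose_conjTranspose, Matrix.mul_assoc]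
  have hB := mul_re_det_le_re_det_conjTranspose_mul_mul (posSemidef_self_mul_conjTranspose H_B) Q
  have hF := mul_re_det_le_re_det_conjTranspose_mul_mul (posSemidef_self_mul_conjTranspose H_F) M
  rw [hQ, det_one, Complex.one_re, mul_one, ← hMM] at hB
  rw [hMFM, hQA, Complex.ofReal_re, mul_comm] at hF
  have hB0 := prod_nonneg fun n (_ : n ∈ Icc (m - k + 1) m) =>
    nthLargest_nonneg (eigenvalues_self_mul_conjTranspose_nonneg H_B) n
  have hF0 := prod_nonneg fun n (_ : n ∈ Icc (m - k + 1) m) =>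
    nthLargest_nonneg (eigenvalues_self_mul_conjTranspose_nonneg H_F) n
  rw [prod_mul_distrib, prod_singVal_eq_sqrt_prod_nthLargest, prod_singVal_eq_sqrt_prod_nthLargest,
    prod_singVal_eq_sqrt_prod_nthLargest, ← Real.sqrt_mul hB0]
  exact Real.sqrt_le_sqrt ((mul_le_mul_of_nonneg_right hB hF0).trans hF)

theorem stmt8 {m : ℕ}
    (H_B : Matrix (Fin m) (Fin m) ℂ) (H_F : Matrix (Fin m) (Fin m) ℂ)
    (Θ : Matrix (Fin m) (Fin m) ℂ) (hΘ : Θᴴ * Θ = 1)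
    (k : ℕ) (hk1 : 1 ≤ k) (hk2 : k ≤ m) :
    ∏ n ∈ Finset.Icc (m - k + 1) m, singVal H_B n * singVal H_F n ≤
      ∏ n ∈ Finset.Icc (m - k + 1) m, singVal (H_B * Θ * H_F) n :=
  stmt8_general H_B H_F Θ hΘ k hk2
end

section
/- For every n with 1 ≤ n ≤ N_S, there exists a unitary matrix Θ ∈ ℂ^{N_S×N_S} (of the form Θ = V_B·Q·U_Fᴴ, where V_B and U_F are right and left singular-vector matrices of H_B and H_F respectively and Q is a permutation matrix) such that σ_n(H_B·Θ·H_F) = max over pairs (i,j) ∈ {1,…,N_S}² with i+j = n+N_S of σ_i(H_B)·σ_j(H_F). -/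
/-!
With `Θ = V_B P U_Fᴴ` the product `H_B Θ H_F` collapses to `U_B Σ_B P Σ_F V_Fᴴ`, so
`(H_B Θ H_F)(H_B Θ H_F)ᴴ` is unitarily similar to a diagonal matrix whose entries are the squares
of `σ_i(H_B) σ_{π(i)}(H_F)`, where `π` is the permutation encoded by `P`. Let `π` fix the indices
`i < n` and reverse `n, …, N_S`. The first `n - 1` products are then at least
`σ_n(H_B) σ_n(H_F)`, which dominates every pair `σ_i(H_B) σ_j(H_F)` with `i + j = n + N_S`, while
all the other products are such pairs and the largest pair occurs among them. Hence the `n`-th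
largest product is exactly the maximum over those pairs.
-/

open Matrix

open Finset

namespace Tuple

theorem card_filter_comp_sort {α : Type*} [LinearOrder α] {m : ℕ} (f : Fin m → α) (p : α → Prop)
    [DecidablePred p] :
    #{i | p ((f ∘ sort f) i)} = #{i | p (f i)} :=
  card_equiv (sort f) (by simp)

end Tuple

section nthLargest

variable {m : ℕ} {f g : Fin m → ℝ} {a : ℝ} {n : ℕ}

theorem nthLargest_le_iff (hn1 : 1 ≤ n) (hn2 : n ≤ m) :
    nthLargest f n ≤ a ↔ m - n < #{i | f i ≤ a} := by
  rw [nthLargest, dif_pos ⟨hn1, hn2⟩,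
    ← Tuple.lt_card_le_iff_apply_le_of_monotone (Tuple.monotone_sort f),
    Tuple.card_filter_comp_sort f (· ≤ a)]

theorem le_nthLargest_iff (hn1 : 1 ≤ n) (hn2 : n ≤ m) :
    a ≤ nthLargest f n ↔ #{i | f i < a} ≤ m - n := by
  rw [nthLargest, dif_pos ⟨hn1, hn2⟩, ← not_lt,
    ← Tuple.lt_card_lt_iff_apply_lt_of_monotone (Tuple.monotone_sort f),
    Tuple.card_filter_comp_sort f (· < a), not_lt]

theorem nthLargest_antitoneOn : AntitoneOn (nthLargest f) (Set.Icc 1 m) := by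
  intro k ⟨hk1, hkm⟩ n ⟨hn1, hnm⟩ hkn
  rw [nthLargest, dif_pos ⟨hn1, hnm⟩, nthLargest, dif_pos ⟨hk1, hkm⟩]
  exact Tuple.monotone_sort f (Fin.mk_le_mk.mpr (by omega))

theorem nthLargest_congr (h : univ.val.map f = univ.val.map g) :
    nthLargest f = nthLargest g := by
  have hcard (p : ℝ → Prop) [DecidablePred p] : #{i | p (f i)} = #{i | p (g i)} := by
    have := congrArg (Multiset.countP p) h
    simp only [Multiset.countP_map] at this
    simpa [Finset.filter, Finset.card] using this
  funext n
  by_cases hn : 1 ≤ n ∧ n ≤ m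
  · exact eq_of_forall_ge_iff fun a => by
      rw [nthLargest_le_iff hn.1 hn.2, nthLargest_le_iff hn.1 hn.2, hcard (· ≤ a)]
  · simp only [nthLargest, dif_neg hn]

theorem nthLargest_succ_eq (k : Fin m) (head : ∀ i < k, a ≤ f i) (tail : ∀ i, k ≤ i → f i ≤ a)
    (attained : ∃ i, k ≤ i ∧ a ≤ f i) : nthLargest f (k + 1) = a := by
  have hk := k.isLt
  obtain ⟨i₀, hki₀, hi₀⟩ := attained
  apply le_antisymm
  · rw [nthLargest_le_iff (by omega) hk]
    calc m - (k + 1) < #(Ici k) := by rw [Fin.card_Ici]; omega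
      _ ≤ #{i | f i ≤ a} := card_le_card fun i hi => by simpa using tail i (by simpa using hi)
  · rw [le_nthLargest_iff (by omega) hk]
    calc #{i | f i < a} ≤ #((Ici k).erase i₀) := card_le_card fun i hi => by
          simp only [mem_filter, mem_univ, true_and] at hi
          simp only [mem_erase, mem_Ici]
          refine ⟨fun h => ?_, ?_⟩
          · subst h; linarith
          · by_contra h; linarith [head i (not_le.mp h)]
      _ = m - (k + 1) := by rw [card_erase_of_mem (mem_Ici.mpr hki₀), Fin.card_Ici]; omega

end nthLargest

namespace Matrix

theorem IsHermitian.eigenvalues_map_eq_of_unitary_conj {𝕜 n : Type*} [RCLike 𝕜] [Fintype n]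
    [DecidableEq n] {A U : Matrix n n 𝕜} (hA : A.IsHermitian) (hU : Uᴴ * U = 1) {d : n → ℝ}
    (h : A = U * diagonal (fun i => (d i : 𝕜)) * Uᴴ) :
    univ.val.map hA.eigenvalues = univ.val.map d := by
  have hchar : A.charpoly = ∏ i, (Polynomial.X - Polynomial.C (d i : 𝕜)) := by
    rw [h, charpoly_mul_comm, ← mul_assoc, hU, one_mul, charpoly_diagonal]
  have hroots := hA.roots_charpoly_eq_eigenvalues
  rw [hchar, Polynomial.roots_prod _ _ (by simp [prod_ne_zero_iff, Polynomial.X_sub_C_ne_zero])]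
    at hroots
  simp only [Polynomial.roots_X_sub_C, Multiset.bind_singleton] at hroots
  exact Multiset.map_injective RCLike.ofReal_injective
    (by rw [Multiset.map_map, Multiset.map_map]; exact hroots.symm)

theorem permMatrix_mem_unitaryGroup {n R : Type*} [DecidableEq n] [Fintype n] [CommRing R]
    [StarRing R] (e : Equiv.Perm n) : e.permMatrix R ∈ unitaryGroup n R := by
  rw [mem_unitaryGroup_iff', star_eq_conjTranspose, conjTranspose_permMatrix, ← permMatrix_mul,
    mul_inv_cancel, permMatrix_one]

theorem permMatrix_mul_diagonal_mul_conjTranspose {n R : Type*} [DecidableEq n] [Fintype n]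
    [Semiring R] [StarRing R] (e : Equiv.Perm n) (v : n → R) :
    e.permMatrix R * diagonal v * (e.permMatrix R)ᴴ = diagonal (v ∘ e) := by
  rw [conjTranspose_permMatrix, PEquiv.toMatrix_toPEquiv_mul, PEquiv.mul_toMatrix_toPEquiv,
    Equiv.Perm.inv_def, Equiv.symm_symm, submatrix_submatrix, Function.comp_id, Function.id_comp,
    submatrix_diagonal_equiv]

theorem mul_mul_conjTranspose_mul_self {R l m n k : Type*} [Semiring R] [StarRing R]
    [Fintype m] [Fintype n] [Fintype k] [DecidableEq n]
    (U : Matrix l m R) (A : Matrix m n R) (V : Matrix k n R) (hV : Vᴴ * V = 1) :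
    U * A * Vᴴ * (U * A * Vᴴ)ᴴ = U * (A * Aᴴ) * Uᴴ := by
  simp only [conjTranspose_mul, conjTranspose_conjTranspose, Matrix.mul_assoc]
  rw [← Matrix.mul_assoc Vᴴ V, hV, Matrix.one_mul]

/-- The rectangular diagonal factor `Σ` of a singular value decomposition; its entries are indexed
by `ℕ` (zero-based) so that they do not depend on the shape `r × c`. -/
def rectDiagonal {R : Type*} [Zero R] {r c : ℕ} (s : ℕ → R) : Matrix (Fin r) (Fin c) R :=
  of fun i j => if (i : ℕ) = j then s i else 0

section rectDiagonal

variable {R : Type*} {r c : ℕ}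

theorem rectDiagonal_mul_diagonal [Semiring R] (s w : ℕ → R) :
    (rectDiagonal s : Matrix (Fin r) (Fin c) R) * diagonal (fun j : Fin c => w j) =
      rectDiagonal fun k => s k * w k := by
  ext i j
  by_cases h : (i : ℕ) = j <;> simp [rectDiagonal, mul_diagonal, h]

theorem rectDiagonal_mul_conjTranspose [Semiring R] [StarRing R] (s t : ℕ → R)
    (hs : ∀ k, c ≤ k → s k = 0) :
    (rectDiagonal s : Matrix (Fin r) (Fin c) R) * (rectDiagonal t : Matrix (Fin r) (Fin c) R)ᴴ =
      diagonal fun i : Fin r => s i * star (t i) := by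
  ext i i'
  simp only [rectDiagonal, mul_apply, conjTranspose_apply, of_apply, diagonal_apply, Fin.ext_iff]
  by_cases hi : (i : ℕ) < c
  · rw [Finset.sum_eq_single ⟨i, hi⟩
      (fun j _ hj => by rw [if_neg fun h => hj (Fin.ext h.symm), zero_mul]) (by simp)]
    by_cases h : (i : ℕ) = i'
    · simp [h]
    · simp [h, Ne.symm h]
  · simp [hs i (not_lt.mp hi)]

end rectDiagonal

end Matrix

section singVal

variable {r c : ℕ} (A : Matrix (Fin r) (Fin c) ℂ) {j : ℕ}

theorem singVal_nonneg (n : ℕ) : 0 ≤ singVal A n :=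
  Real.sqrt_nonneg _

theorem singVal_antitoneOn : AntitoneOn (singVal A) (Set.Ici 1) := by
  intro k hk j _ hkj
  rcases le_or_gt j r with hjr | hrj
  · exact Real.sqrt_le_sqrt (nthLargest_antitoneOn ⟨hk, by omega⟩ ⟨le_trans hk hkj, hjr⟩ hkj)
  · rw [singVal, nthLargest, dif_neg (by omega), Real.sqrt_zero]
    exact singVal_nonneg A k

theorem singVal_eq_zero_of_height_lt (hj : r < j) : singVal A j = 0 := by
  rw [singVal, nthLargest, dif_neg (by omega), Real.sqrt_zero]

theorem singVal_eq_zero_of_width_lt (hj : c < j) : singVal A j = 0 := by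
  rcases le_or_gt j r with hjr | hrj
  · have hA := isHermitian_mul_conjTranspose_self A
    have hrank : #{i | hA.eigenvalues i ≠ 0} ≤ c := by
      rw [← Fintype.card_subtype, ← hA.rank_eq_card_non_zero_eigs]
      exact (rank_mul_le_left A Aᴴ).trans (rank_le_width A)
    have hsplit := card_filter_add_card_filter_not (s := univ) (fun i => hA.eigenvalues i = 0)
    rw [singVal, Real.sqrt_eq_zero', nthLargest_le_iff (by omega) hjr]
    calc r - j < #{i | hA.eigenvalues i = 0} := by
          simp only [ne_eq, card_univ, Fintype.card_fin] at hsplit hrank; omega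
      _ ≤ #{i | hA.eigenvalues i ≤ 0} := card_le_card fun i hi => by simp_all
  · exact singVal_eq_zero_of_height_lt A hrj

end singVal

section SVD

variable {N_R N_S N_T : ℕ} {H_B : Matrix (Fin N_R) (Fin N_S) ℂ} {H_F : Matrix (Fin N_S) (Fin N_T) ℂ}
  {U_B : Matrix (Fin N_R) (Fin N_R) ℂ} {V_B : Matrix (Fin N_S) (Fin N_S) ℂ}
  {U_F : Matrix (Fin N_S) (Fin N_S) ℂ} {V_F : Matrix (Fin N_T) (Fin N_T) ℂ} {s t : ℕ → ℝ}

theorem svd_mul_permMatrix_mul_svd_mul_conjTranspose (hVB : V_Bᴴ * V_B = 1)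
    (hUF : U_Fᴴ * U_F = 1) (hVF : V_Fᴴ * V_F = 1)
    (hB : H_B = U_B * (rectDiagonal fun k => (s k : ℂ) : Matrix (Fin N_R) (Fin N_S) ℂ) * V_Bᴴ)
    (hF : H_F = U_F * (rectDiagonal fun k => (t k : ℂ) : Matrix (Fin N_S) (Fin N_T) ℂ) * V_Fᴴ)
    (hs : ∀ k, N_S ≤ k → s k = 0) (ht : ∀ k, N_T ≤ k → t k = 0)
    (e : Equiv.Perm (Fin N_S)) (p : ℕ → ℕ) (hp : ∀ j, (e j : ℕ) = p j) :
    H_B * (V_B * e.permMatrix ℂ * U_Fᴴ) * H_F * (H_B * (V_B * e.permMatrix ℂ * U_Fᴴ) * H_F)ᴴ =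
      U_B * diagonal (fun i : Fin N_R => (((s i * t (p i)) ^ 2 : ℝ) : ℂ)) * U_Bᴴ := by
  set DB : Matrix (Fin N_R) (Fin N_S) ℂ := rectDiagonal fun k => (s k : ℂ)
  set DF : Matrix (Fin N_S) (Fin N_T) ℂ := rectDiagonal fun k => (t k : ℂ)
  set P := e.permMatrix ℂ
  have hX : H_B * (V_B * P * U_Fᴴ) * H_F = U_B * (DB * P * DF) * V_Fᴴ := by
    rw [hB, hF]
    simp only [Matrix.mul_assoc]
    rw [← Matrix.mul_assoc V_Bᴴ, hVB, Matrix.one_mul, ← Matrix.mul_assoc U_Fᴴ, hUF, Matrix.one_mul]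
  have hDF : DF * DFᴴ = diagonal fun j : Fin N_S => ((t j ^ 2 : ℝ) : ℂ) := by
    rw [rectDiagonal_mul_conjTranspose _ _ (by simp +contextual [ht])]
    simp [sq]
  have hP : P * diagonal (fun j : Fin N_S => ((t j ^ 2 : ℝ) : ℂ)) * Pᴴ =
      diagonal fun j : Fin N_S => ((t (p j) ^ 2 : ℝ) : ℂ) := by
    rw [permMatrix_mul_diagonal_mul_conjTranspose]
    congr 1
    ext j
    simp [hp]
  have hDB : DB * diagonal (fun j : Fin N_S => ((t (p j) ^ 2 : ℝ) : ℂ)) * DBᴴ =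
      diagonal (fun i : Fin N_R => (((s i * t (p i)) ^ 2 : ℝ) : ℂ)) := by
    dsimp only [DB]
    rw [rectDiagonal_mul_diagonal (w := fun k => ((t (p k) ^ 2 : ℝ) : ℂ)),
      rectDiagonal_mul_conjTranspose _ _ (by simp +contextual [hs])]
    congr 1
    ext i
    simp only [Complex.ofReal_pow, Complex.ofReal_mul, RCLike.star_def, Complex.conj_ofReal]
    ring
  rw [hX, mul_mul_conjTranspose_mul_self _ _ _ hVF, ← hDB, ← hP, ← hDF]
  simp only [conjTranspose_mul, Matrix.mul_assoc]

theorem singVal_svd_mul_permMatrix_mul_svd (hUB : U_Bᴴ * U_B = 1) (hVB : V_Bᴴ * V_B = 1)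
    (hUF : U_Fᴴ * U_F = 1) (hVF : V_Fᴴ * V_F = 1)
    (hB : H_B = U_B * (rectDiagonal fun k => (s k : ℂ) : Matrix (Fin N_R) (Fin N_S) ℂ) * V_Bᴴ)
    (hF : H_F = U_F * (rectDiagonal fun k => (t k : ℂ) : Matrix (Fin N_S) (Fin N_T) ℂ) * V_Fᴴ)
    (hs : ∀ k, N_S ≤ k → s k = 0) (ht : ∀ k, N_T ≤ k → t k = 0)
    (e : Equiv.Perm (Fin N_S)) (p : ℕ → ℕ) (hp : ∀ j, (e j : ℕ) = p j) (n : ℕ) :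
    singVal (H_B * (V_B * e.permMatrix ℂ * U_Fᴴ) * H_F) n =
      √(nthLargest (fun i : Fin N_R => (s i * t (p i)) ^ 2) n) := by
  have hX := svd_mul_permMatrix_mul_svd_mul_conjTranspose hVB hUF hVF hB hF hs ht e p hp
  rw [singVal, nthLargest_congr
    ((isHermitian_mul_conjTranspose_self _).eigenvalues_map_eq_of_unitary_conj hUB hX)]
  rfl

end SVD

/-- With `a = n - 1`, this pairs (one-based) the `i`-th singular value of `H_B` with the
`(n + N - i)`-th one of `H_F` for `n ≤ i ≤ N`, and with the `i`-th one for `i < n`. -/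
def pairIndex (a N k : ℕ) : ℕ :=
  if a ≤ k then a + N - 1 - k else k

theorem pairIndex_lt {a N k : ℕ} (hk : k < N) : pairIndex a N k < N := by
  unfold pairIndex; split_ifs <;> omega

theorem pairIndex_pairIndex {a N k : ℕ} (hk : k < N) : pairIndex a N (pairIndex a N k) = k := by
  unfold pairIndex; split_ifs <;> omega

def pairPerm (a N : ℕ) : Equiv.Perm (Fin N) :=
  Function.Involutive.toPerm (fun k => ⟨pairIndex a N k, pairIndex_lt k.isLt⟩)
    fun k => Fin.ext (pairIndex_pairIndex k.isLt)

theorem exists_sSup_pairProducts_eq (f g : ℕ → ℝ) {n N : ℕ} (hn1 : 1 ≤ n) (hnN : n ≤ N) :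
    ∃ i₀, n ≤ i₀ ∧ i₀ ≤ N ∧
      (∀ i, n ≤ i → i ≤ N → f i * g (n + N - i) ≤ f i₀ * g (n + N - i₀)) ∧
      sSup {x : ℝ | ∃ i j : ℕ, 1 ≤ i ∧ i ≤ N ∧ 1 ≤ j ∧ j ≤ N ∧ i + j = n + N ∧ x = f i * g j} =
        f i₀ * g (n + N - i₀) := by
  obtain ⟨i₀, hi₀, hmax⟩ :=
    exists_max_image (Icc n N) (fun i => f i * g (n + N - i)) ⟨n, by simp [hnN]⟩
  simp only [mem_Icc] at hi₀ hmax
  refine ⟨i₀, hi₀.1, hi₀.2, fun i h1 h2 => hmax i ⟨h1, h2⟩, IsGreatest.csSup_eq ⟨?_, ?_⟩⟩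
  · exact ⟨i₀, n + N - i₀, by omega, by omega, by omega, by omega, by omega, rfl⟩
  · rintro x ⟨i, j, -, hiN, -, hjN, hij, rfl⟩
    obtain rfl : j = n + N - i := by omega
    exact hmax i ⟨by omega, hiN⟩

theorem nthLargest_pairIndex_eq {m N c k i₀ : ℕ} (A : Matrix (Fin m) (Fin N) ℂ)
    (B : Matrix (Fin N) (Fin c) ℂ) (hkm : k < m) (hki₀ : k < i₀) (hi₀N : i₀ ≤ N)
    (hmax : ∀ i, k < i → i ≤ N →
      singVal A i * singVal B (k + 1 + N - i) ≤ singVal A i₀ * singVal B (k + 1 + N - i₀)) :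
    nthLargest (fun i : Fin m => (singVal A (i + 1) * singVal B (pairIndex k N i + 1)) ^ 2)
      (k + 1) = (singVal A i₀ * singVal B (k + 1 + N - i₀)) ^ 2 := by
  have hnonneg (i j : ℕ) : 0 ≤ singVal A i * singVal B j :=
    mul_nonneg (singVal_nonneg A i) (singVal_nonneg B j)
  apply nthLargest_succ_eq (⟨k, hkm⟩ : Fin m)
  · intro i (hik : (i : ℕ) < k)
    rw [pairIndex, if_neg (by omega)]
    refine pow_le_pow_left₀ (hnonneg _ _) (mul_le_mul ?_ ?_ (singVal_nonneg B _)
      (singVal_nonneg A _)) 2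
    · exact singVal_antitoneOn A (Set.mem_Ici.mpr (by omega)) (Set.mem_Ici.mpr (by omega))
        (by omega)
    · exact singVal_antitoneOn B (Set.mem_Ici.mpr (by omega)) (Set.mem_Ici.mpr (by omega))
        (by omega)
  · intro i (hki : k ≤ (i : ℕ))
    rcases le_or_gt ((i : ℕ) + 1) N with hiN | hNi
    · rw [pairIndex, if_pos hki, show k + N - 1 - i + 1 = k + 1 + N - (i + 1) by omega]
      exact pow_le_pow_left₀ (hnonneg _ _) (hmax _ (by omega) hiN) 2
    · rw [singVal_eq_zero_of_width_lt A hNi, zero_mul, sq, mul_zero]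
      positivity
  · rcases le_or_gt i₀ m with hi₀m | hmi₀
    · refine ⟨⟨i₀ - 1, by omega⟩, Fin.mk_le_mk.mpr (by omega), le_of_eq ?_⟩
      dsimp only
      rw [pairIndex, if_pos (by omega), show k + N - 1 - (i₀ - 1) + 1 = k + 1 + N - i₀ by omega,
        show i₀ - 1 + 1 = i₀ by omega]
    · refine ⟨⟨k, hkm⟩, le_rfl, ?_⟩
      rw [singVal_eq_zero_of_height_lt A hmi₀, zero_mul, sq, mul_zero]
      positivity

theorem stmt13 {N_R N_S N_T : ℕ}
    (H_B : Matrix (Fin N_R) (Fin N_S) ℂ) (H_F : Matrix (Fin N_S) (Fin N_T) ℂ)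
    -- singular value decompositions `H_B = U_B Σ_B V_Bᴴ` and `H_F = U_F Σ_F V_Fᴴ`,
    -- with the singular values in descending order on the diagonal:
    (U_B : Matrix (Fin N_R) (Fin N_R) ℂ) (V_B : Matrix (Fin N_S) (Fin N_S) ℂ)
    (U_F : Matrix (Fin N_S) (Fin N_S) ℂ) (V_F : Matrix (Fin N_T) (Fin N_T) ℂ)
    (hUB : U_Bᴴ * U_B = 1) (hVB : V_Bᴴ * V_B = 1)
    (hUF : U_Fᴴ * U_F = 1) (hVF : V_Fᴴ * V_F = 1)
    (hB : H_B = U_B * (Matrix.of fun (i : Fin N_R) (j : Fin N_S) =>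
      if (i : ℕ) = (j : ℕ) then ((singVal H_B ((i : ℕ) + 1) : ℝ) : ℂ) else 0) * V_Bᴴ)
    (hF : H_F = U_F * (Matrix.of fun (i : Fin N_S) (j : Fin N_T) =>
      if (i : ℕ) = (j : ℕ) then ((singVal H_F ((i : ℕ) + 1) : ℝ) : ℂ) else 0) * V_Fᴴ)
    (n : ℕ) (hn1 : 1 ≤ n) (hn2 : n ≤ N_S) :
    ∃ (Θ : Matrix (Fin N_S) (Fin N_S) ℂ) (e : Equiv.Perm (Fin N_S)),
      Θ = V_B * e.permMatrix ℂ * U_Fᴴ ∧ Θᴴ * Θ = 1 ∧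
      singVal (H_B * Θ * H_F) n =
        sSup {x : ℝ | ∃ i j : ℕ, 1 ≤ i ∧ i ≤ N_S ∧ 1 ≤ j ∧ j ≤ N_S ∧
          i + j = n + N_S ∧ x = singVal H_B i * singVal H_F j} := by
  obtain ⟨i₀, hni₀, hi₀N, hmax, hsup⟩ :=
    exists_sSup_pairProducts_eq (singVal H_B) (singVal H_F) hn1 hn2
  obtain ⟨k, rfl⟩ : ∃ k, n = k + 1 := ⟨n - 1, by omega⟩
  refine ⟨_, pairPerm k N_S, rfl, ?_, ?_⟩
  · exact mem_unitaryGroup_iff'.mp <| mul_mem (mul_mem (mem_unitaryGroup_iff'.mpr hVB)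
      (permMatrix_mem_unitaryGroup _)) (Unitary.star_mem (mem_unitaryGroup_iff'.mpr hUF))
  rw [hsup, singVal_svd_mul_permMatrix_mul_svd (s := fun k => singVal H_B (k + 1))
    (t := fun k => singVal H_F (k + 1)) hUB hVB hUF hVF hB hF
    (fun k hk => singVal_eq_zero_of_width_lt _ (by omega))
    (fun k hk => singVal_eq_zero_of_width_lt _ (by omega)) _ (pairIndex k N_S) fun _ => rfl]
  rcases lt_or_ge k N_R with hnR | hRn
  · rw [nthLargest_pairIndex_eq H_B H_F hnR hni₀ hi₀N hmax,
      Real.sqrt_sq (mul_nonneg (singVal_nonneg _ _) (singVal_nonneg _ _))]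
  · rw [nthLargest, dif_neg (by omega), Real.sqrt_zero,
      singVal_eq_zero_of_height_lt H_B (by omega : N_R < i₀), zero_mul]
end

section
/- Let H_B = U_B·Σ_B·V_Bᴴ and H_F = U_F·Σ_F·V_Fᴴ be singular value decompositions with singular values in descending order, where V_B, U_F ∈ ℂ^{N_S×N_S} are unitary, and let J ∈ ℂ^{N_S×N_S} be the exchange (backward identity) matrix. Then the unitary choice Θ = V_B·U_Fᴴ attains the upper bound ‖H_B·Θ·H_F‖_F² = ∑_{n=1}^{N_S} σ_n(H_B)²·σ_n(H_F)², and the unitary choice Θ = V_B·J·U_Fᴴ attains the lower bound ‖H_B·Θ·H_F‖_F² = ∑_{n=1}^{N_S} σ_n(H_B)²·σ_{N_S−n+1}(H_F)². -/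
open Matrix

section aux

lemma singVal_eq_zero_rows {r c : ℕ} (A : Matrix (Fin r) (Fin c) ℂ) {n : ℕ} (h : r < n) :
    singVal A n = 0 := by
  rw [singVal, nthLargest, dif_neg (by omega), Real.sqrt_zero]

lemma singVal_eq_zero_cols {r c : ℕ} (A : Matrix (Fin r) (Fin c) ℂ) {n : ℕ} (h : c < n) :
    singVal A n = 0 := by
  rw [singVal, nthLargest]
  split_ifs with hn
  · set f := (Matrix.isHermitian_mul_conjTranspose_self A).eigenvalues with hf
    have hnn : ∀ i, 0 ≤ f i := Matrix.eigenvalues_self_mul_conjTranspose_nonneg A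
    suffices hle : (f ∘ Tuple.sort f) ⟨r - n, by omega⟩ ≤ 0 by
      have := hnn (Tuple.sort f ⟨r - n, by omega⟩)
      simp only [Function.comp] at hle ⊢
      rw [show (f (Tuple.sort f ⟨r - n, by omega⟩)) = 0 from le_antisymm hle this, Real.sqrt_zero]
    by_contra hpos
    push_neg at hpos
    have hmono := Tuple.monotone_sort f
    have hinj : Function.Injective
        (fun k : Fin n => (⟨Tuple.sort f ⟨r - n + k, by omega⟩,
          by
            have h2 := hmono (a := ⟨r - n, by omega⟩) (b := ⟨r - n + k, by omega⟩)
              (by simp [Fin.le_def])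
            exact ne_of_gt (lt_of_lt_of_le hpos h2)⟩ : {i // f i ≠ 0})) := by
      intro a b hab
      simp only [Subtype.mk.injEq] at hab
      have := (Tuple.sort f).injective hab
      simpa [Fin.ext_iff] using this
    have hcard : n ≤ Fintype.card {i // f i ≠ 0} := by
      simpa using Fintype.card_le_of_injective _ hinj
    have hrank : (A * Aᴴ).rank = Fintype.card {i // f i ≠ 0} :=
      (Matrix.isHermitian_mul_conjTranspose_self A).rank_eq_card_non_zero_eigs
    have h1 : (A * Aᴴ).rank ≤ A.rank := Matrix.rank_mul_le_left A Aᴴ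
    have h2 : A.rank ≤ c := Matrix.rank_le_width A
    omega
  · exact Real.sqrt_zero

lemma trace_red {m n : Type*} [Fintype m] [Fintype n] [DecidableEq m] [DecidableEq n]
    (U : Matrix m m ℂ) (V : Matrix n n ℂ) (X : Matrix m n ℂ)
    (hU : Uᴴ * U = 1) (hV : Vᴴ * V = 1) :
    Matrix.trace ((U * X * Vᴴ) * (U * X * Vᴴ)ᴴ) = Matrix.trace (X * Xᴴ) := by
  have h1 : (U * X * Vᴴ) * (U * X * Vᴴ)ᴴ = U * (X * Xᴴ) * Uᴴ := by
    rw [conjTranspose_mul, conjTranspose_mul, conjTranspose_conjTranspose]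
    rw [show U * X * Vᴴ * (V * (Xᴴ * Uᴴ)) = U * (X * ((Vᴴ * V) * (Xᴴ * Uᴴ))) from by
      simp [Matrix.mul_assoc], hV, Matrix.one_mul]
    simp [Matrix.mul_assoc]
  rw [h1, Matrix.trace_mul_cycle, ← Matrix.mul_assoc, hU, Matrix.one_mul]

lemma re_trace {m n : Type*} [Fintype m] [Fintype n] (X : Matrix m n ℂ) :
    (Matrix.trace (X * Xᴴ)).re = ∑ i, ∑ j, Complex.normSq (X i j) := by
  simp only [Matrix.trace, Matrix.diag, Matrix.mul_apply, Matrix.conjTranspose_apply]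
  rw [Complex.re_sum]
  refine Finset.sum_congr rfl fun i _ => ?_
  rw [Complex.re_sum]
  refine Finset.sum_congr rfl fun j _ => ?_
  rw [RCLike.star_def, Complex.mul_conj]
  simp

lemma entry1 {N_R N_S N_T : ℕ} (b f : ℕ → ℝ) (i : Fin N_R) (j : Fin N_T) :
    ((Matrix.of fun (i : Fin N_R) (j : Fin N_S) =>
        if (i : ℕ) = (j : ℕ) then ((b ((i : ℕ) + 1) : ℝ) : ℂ) else 0) *
      (Matrix.of fun (i : Fin N_S) (j : Fin N_T) =>
        if (i : ℕ) = (j : ℕ) then ((f ((i : ℕ) + 1) : ℝ) : ℂ) else 0)) i j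
    = if (i : ℕ) = (j : ℕ) ∧ (i : ℕ) < N_S
        then ((b ((i : ℕ) + 1) * f ((i : ℕ) + 1) : ℝ) : ℂ) else 0 := by
  rw [Matrix.mul_apply]
  by_cases hi : (i : ℕ) < N_S
  · rw [Finset.sum_eq_single (⟨(i : ℕ), hi⟩ : Fin N_S)]
    · by_cases hij : (i : ℕ) = (j : ℕ)
      · simp only [Matrix.of_apply, if_pos hij, if_pos rfl]
        rw [if_pos (show (i:ℕ) = (j:ℕ) ∧ (i:ℕ) < N_S from ⟨hij, hi⟩)]
        simp only [if_true]
        push_cast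
        ring
      · simp [hij]
    · intro k _ hk
      simp only [Matrix.of_apply]
      rw [if_neg fun h => hk (Fin.ext (by simpa using h.symm)), zero_mul]
    · simp
  · rw [Finset.sum_eq_zero fun k _ => by
      simp only [Matrix.of_apply]
      rw [if_neg (by omega), zero_mul], if_neg (by omega)]

lemma entryJ {N_R N_S : ℕ} (b : ℕ → ℝ) (i : Fin N_R) (k : Fin N_S) :
    ((Matrix.of fun (i : Fin N_R) (j : Fin N_S) =>
        if (i : ℕ) = (j : ℕ) then ((b ((i : ℕ) + 1) : ℝ) : ℂ) else 0) *
      (Matrix.of fun (i : Fin N_S) (j : Fin N_S) =>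
        if (i : ℕ) + (j : ℕ) + 1 = N_S then (1 : ℂ) else 0)) i k
    = if (i : ℕ) + (k : ℕ) + 1 = N_S then ((b ((i : ℕ) + 1) : ℝ) : ℂ) else 0 := by
  rw [Matrix.mul_apply]
  by_cases hi : (i : ℕ) < N_S
  · rw [Finset.sum_eq_single (⟨(i : ℕ), hi⟩ : Fin N_S)]
    · by_cases hik : (i : ℕ) + (k : ℕ) + 1 = N_S <;> simp [hik, hi]
    · intro l _ hl
      simp only [Matrix.of_apply]
      rw [if_neg fun h => hl (Fin.ext (by simpa using h.symm)), zero_mul]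
    · simp
  · rw [Finset.sum_eq_zero fun l _ => by
      simp only [Matrix.of_apply]
      rw [if_neg (by omega), zero_mul], if_neg (by omega)]

lemma entry2 {N_R N_S N_T : ℕ} (b f : ℕ → ℝ) (i : Fin N_R) (j : Fin N_T) :
    ((Matrix.of fun (i : Fin N_R) (j : Fin N_S) =>
        if (i : ℕ) = (j : ℕ) then ((b ((i : ℕ) + 1) : ℝ) : ℂ) else 0) *
      (Matrix.of fun (i : Fin N_S) (j : Fin N_S) =>
        if (i : ℕ) + (j : ℕ) + 1 = N_S then (1 : ℂ) else 0) *
      (Matrix.of fun (i : Fin N_S) (j : Fin N_T) =>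
        if (i : ℕ) = (j : ℕ) then ((f ((i : ℕ) + 1) : ℝ) : ℂ) else 0)) i j
    = if (i : ℕ) + (j : ℕ) + 1 = N_S
        then ((b ((i : ℕ) + 1) * f ((j : ℕ) + 1) : ℝ) : ℂ) else 0 := by
  rw [Matrix.mul_apply]
  have hrw : ∀ k : Fin N_S, ∀ _ : k ∈ Finset.univ,
      ((Matrix.of fun (i : Fin N_R) (j : Fin N_S) =>
        if (i : ℕ) = (j : ℕ) then ((b ((i : ℕ) + 1) : ℝ) : ℂ) else 0) *
      (Matrix.of fun (i : Fin N_S) (j : Fin N_S) =>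
        if (i : ℕ) + (j : ℕ) + 1 = N_S then (1 : ℂ) else 0)) i k *
      (Matrix.of fun (i : Fin N_S) (j : Fin N_T) =>
        if (i : ℕ) = (j : ℕ) then ((f ((i : ℕ) + 1) : ℝ) : ℂ) else 0) k j
      = (if (i : ℕ) + (k : ℕ) + 1 = N_S then ((b ((i : ℕ) + 1) : ℝ) : ℂ) else 0) *
        (if (k : ℕ) = (j : ℕ) then ((f ((k : ℕ) + 1) : ℝ) : ℂ) else 0) := by
    intro k _
    rw [entryJ]
    rfl
  rw [Finset.sum_congr rfl hrw]
  by_cases hj : (j : ℕ) < N_S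
  · rw [Finset.sum_eq_single (⟨(j : ℕ), hj⟩ : Fin N_S)]
    · by_cases hij : (i : ℕ) + (j : ℕ) + 1 = N_S <;> simp [hij]
    · intro k _ hk
      have h2 : ¬((k : ℕ) = (j : ℕ)) := fun h => hk (Fin.ext (by simpa using h))
      rw [if_neg h2, mul_zero]
    · simp
  · rw [Finset.sum_eq_zero fun k _ => by
      have h2 : ¬((k : ℕ) = (j : ℕ)) := by omega
      rw [if_neg h2, mul_zero], if_neg (by omega)]

lemma rowsum1 {N_S N_T : ℕ} (b f : ℕ → ℝ) (m : ℕ) :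
    ∑ j : Fin N_T, Complex.normSq (if m = (j : ℕ) ∧ m < N_S
        then ((b (m + 1) * f (m + 1) : ℝ) : ℂ) else 0)
    = if m < N_S ∧ m < N_T then (b (m + 1))^2 * (f (m + 1))^2 else 0 := by
  by_cases hm : m < N_S ∧ m < N_T
  · rw [Finset.sum_eq_single (⟨m, hm.2⟩ : Fin N_T)]
    · rw [if_pos ⟨rfl, hm.1⟩, if_pos hm, Complex.normSq_ofReal]; ring
    · intro k _ hk
      rw [if_neg fun (h : m = (k:ℕ) ∧ m < N_S) => hk (Fin.ext (by simp [← h.1])),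
        Complex.normSq_zero]
    · simp
  · rw [Finset.sum_eq_zero fun k _ => by
      rw [if_neg fun (h : m = (k:ℕ) ∧ m < N_S) => hm ⟨h.2, h.1 ▸ k.isLt⟩,
        Complex.normSq_zero], if_neg hm]

lemma rowsum2 {N_S N_T : ℕ} (b f : ℕ → ℝ) (m : ℕ) :
    ∑ j : Fin N_T, Complex.normSq (if m + (j : ℕ) + 1 = N_S
        then ((b (m + 1) * f ((j : ℕ) + 1) : ℝ) : ℂ) else 0)
    = if m < N_S ∧ N_S ≤ N_T + m then (b (m + 1))^2 * (f (N_S - m))^2 else 0 := by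
  by_cases hm : m < N_S ∧ N_S ≤ N_T + m
  · rw [Finset.sum_eq_single (⟨N_S - m - 1, by omega⟩ : Fin N_T)]
    · rw [if_pos (by simp; omega), if_pos hm, Complex.normSq_ofReal]
      have : N_S - m - 1 + 1 = N_S - m := by omega
      simp only [this]
      ring
    · intro k _ hk
      rw [if_neg fun (h : m + (k:ℕ) + 1 = N_S) => hk (Fin.ext (by simp; omega)),
        Complex.normSq_zero]
    · simp
  · rw [Finset.sum_eq_zero fun k _ => by
      rw [if_neg (by intro h; exact hm ⟨by omega, by have := k.isLt; omega⟩),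
        Complex.normSq_zero], if_neg hm]

lemma sum_reshape {N_R N_S : ℕ} (P : ℕ → Prop) [DecidablePred P] (t : ℕ → ℝ)
    (hP : ∀ n, N_S ≤ n → ¬ P n)
    (hB0 : ∀ n, N_R ≤ n → t n = 0)
    (ht : ∀ n, n < N_S → ¬ P n → t n = 0) :
    ∑ n ∈ Finset.range N_R, (if P n then t n else 0) = ∑ n ∈ Finset.range N_S, t n := by
  have hF0 : ∀ n, N_R ≤ n → (if P n then t n else 0) = 0 := by
    intro n hn; split_ifs; exacts [hB0 n hn, rfl]
  have h1 : ∑ n ∈ Finset.range N_R, (if P n then t n else 0)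
      = ∑ n ∈ Finset.range (max N_R N_S), (if P n then t n else 0) := by
    exact Finset.sum_subset (Finset.range_subset_range.2 (le_max_left N_R N_S))
      (fun n _ hn' => hF0 n (by simpa using hn'))
  have h2 : ∑ n ∈ Finset.range N_S, t n
      = ∑ n ∈ Finset.range (max N_R N_S), (if P n then t n else 0) := by
    rw [← Finset.sum_subset (Finset.range_subset_range.2 (le_max_right N_R N_S))
      (fun n hn hn' => by
        simp only [Finset.mem_range, not_lt] at hn hn'
        rw [if_neg (hP n hn')])]
    refine Finset.sum_congr rfl fun n hn => ?_
    simp only [Finset.mem_range] at hn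
    by_cases hp : P n
    · rw [if_pos hp]
    · rw [if_neg hp, ht n hn hp]
  rw [h1, h2]

lemma sum_Icc_one (N : ℕ) (f : ℕ → ℝ) :
    ∑ n ∈ Finset.Icc 1 N, f n = ∑ n ∈ Finset.range N, f (n + 1) := by
  rw [← Finset.Ico_add_one_right_eq_Icc, Finset.sum_Ico_eq_sum_range]
  simp [Nat.add_comm]

lemma assemble {α β γ : Type*} [Fintype α] [Fintype β] [Fintype γ] [DecidableEq β]
    (U_B : Matrix α α ℂ) (SB : Matrix α β ℂ) (V_B U_F W : Matrix β β ℂ)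
    (SF : Matrix β γ ℂ) (V_F : Matrix γ γ ℂ)
    (hVB : V_Bᴴ * V_B = 1) (hUF : U_Fᴴ * U_F = 1) :
    (U_B * SB * V_Bᴴ) * (V_B * W * U_Fᴴ) * (U_F * SF * V_Fᴴ) = U_B * (SB * W * SF) * V_Fᴴ := by
  simp only [Matrix.mul_assoc]
  rw [← Matrix.mul_assoc V_Bᴴ V_B, hVB, Matrix.one_mul,
    ← Matrix.mul_assoc U_Fᴴ U_F, hUF, Matrix.one_mul]

lemma assemble' {α β γ : Type*} [Fintype α] [Fintype β] [Fintype γ] [DecidableEq β]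
    (U_B : Matrix α α ℂ) (SB : Matrix α β ℂ) (V_B U_F : Matrix β β ℂ)
    (SF : Matrix β γ ℂ) (V_F : Matrix γ γ ℂ)
    (hVB : V_Bᴴ * V_B = 1) (hUF : U_Fᴴ * U_F = 1) :
    (U_B * SB * V_Bᴴ) * (V_B * U_Fᴴ) * (U_F * SF * V_Fᴴ) = U_B * (SB * SF) * V_Fᴴ := by
  have := assemble U_B SB V_B U_F 1 SF V_F hVB hUF
  rw [Matrix.mul_one, Matrix.mul_one] at this
  exact this

end aux

theorem stmt15 {N_R N_S N_T : ℕ}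
    (H_B : Matrix (Fin N_R) (Fin N_S) ℂ) (H_F : Matrix (Fin N_S) (Fin N_T) ℂ)
    -- singular value decompositions `H_B = U_B Σ_B V_Bᴴ` and `H_F = U_F Σ_F V_Fᴴ`,
    -- with the singular values in descending order on the diagonal:
    (U_B : Matrix (Fin N_R) (Fin N_R) ℂ) (V_B : Matrix (Fin N_S) (Fin N_S) ℂ)
    (U_F : Matrix (Fin N_S) (Fin N_S) ℂ) (V_F : Matrix (Fin N_T) (Fin N_T) ℂ)
    (hUB : U_Bᴴ * U_B = 1) (hVB : V_Bᴴ * V_B = 1)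
    (hUF : U_Fᴴ * U_F = 1) (hVF : V_Fᴴ * V_F = 1)
    (hB : H_B = U_B * (Matrix.of fun (i : Fin N_R) (j : Fin N_S) =>
      if (i : ℕ) = (j : ℕ) then ((singVal H_B ((i : ℕ) + 1) : ℝ) : ℂ) else 0) * V_Bᴴ)
    (hF : H_F = U_F * (Matrix.of fun (i : Fin N_S) (j : Fin N_T) =>
      if (i : ℕ) = (j : ℕ) then ((singVal H_F ((i : ℕ) + 1) : ℝ) : ℂ) else 0) * V_Fᴴ)
    -- the exchange (backward identity) matrix:
    (J : Matrix (Fin N_S) (Fin N_S) ℂ)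
    (hJ : J = Matrix.of fun (i : Fin N_S) (j : Fin N_S) =>
      if (i : ℕ) + (j : ℕ) + 1 = N_S then 1 else 0) :
    (Matrix.trace ((H_B * (V_B * U_Fᴴ) * H_F) * (H_B * (V_B * U_Fᴴ) * H_F)ᴴ)).re =
      ∑ n ∈ Finset.Icc 1 N_S, (singVal H_B n) ^ 2 * (singVal H_F n) ^ 2 ∧
    (Matrix.trace ((H_B * (V_B * J * U_Fᴴ) * H_F) * (H_B * (V_B * J * U_Fᴴ) * H_F)ᴴ)).re =
      ∑ n ∈ Finset.Icc 1 N_S, (singVal H_B n) ^ 2 * (singVal H_F (N_S - n + 1)) ^ 2 := by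
  have hsB0 : ∀ n, N_R < n → singVal H_B n = 0 := fun n h => singVal_eq_zero_rows _ h
  have hsF0 : ∀ n, N_T < n → singVal H_F n = 0 := fun n h => singVal_eq_zero_cols _ h
  set sB : ℕ → ℝ := singVal H_B with hsB
  set sF : ℕ → ℝ := singVal H_F with hsF
  constructor
  · rw [hB, hF, assemble' U_B _ V_B U_F _ V_F hVB hUF,
      trace_red U_B V_F _ hUB hVF, re_trace]
    rw [Finset.sum_congr rfl (fun i (_ : i ∈ Finset.univ) => Finset.sum_congr rfl
      (fun j (_ : j ∈ Finset.univ) => by rw [entry1 sB sF i j]))]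
    rw [Finset.sum_congr rfl (fun (i : Fin N_R) (_ : i ∈ Finset.univ) => rowsum1 sB sF (i : ℕ))]
    rw [Fin.sum_univ_eq_sum_range
      (fun n => if n < N_S ∧ n < N_T then (sB (n + 1))^2 * (sF (n + 1))^2 else 0) N_R]
    rw [sum_Icc_one]
    exact sum_reshape (fun n => n < N_S ∧ n < N_T)
      (fun n => (sB (n + 1))^2 * (sF (n + 1))^2)
      (fun n h hp => by omega)
      (fun n h => by
        show sB (n + 1) ^ 2 * sF (n + 1) ^ 2 = 0
        rw [hsB0 (n + 1) (by omega)]; ring)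
      (fun n h hp => by
        show sB (n + 1) ^ 2 * sF (n + 1) ^ 2 = 0
        rw [hsF0 (n + 1) (by omega)]; ring)
  · rw [hB, hF, hJ, assemble U_B _ V_B U_F _ _ V_F hVB hUF,
      trace_red U_B V_F _ hUB hVF, re_trace]
    rw [Finset.sum_congr rfl (fun i (_ : i ∈ Finset.univ) => Finset.sum_congr rfl
      (fun j (_ : j ∈ Finset.univ) => by rw [entry2 sB sF i j]))]
    rw [Finset.sum_congr rfl (fun (i : Fin N_R) (_ : i ∈ Finset.univ) => rowsum2 sB sF (i : ℕ))]
    rw [Fin.sum_univ_eq_sum_range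
      (fun n => if n < N_S ∧ N_S ≤ N_T + n then (sB (n + 1))^2 * (sF (N_S - n))^2 else 0) N_R]
    rw [sum_Icc_one]
    rw [Finset.sum_congr rfl (fun n (hn : n ∈ Finset.range N_S) => by
      rw [show N_S - (n + 1) + 1 = N_S - n from by
        have := Finset.mem_range.1 hn; omega])]
    exact sum_reshape (fun n => n < N_S ∧ N_S ≤ N_T + n)
      (fun n => (sB (n + 1))^2 * (sF (N_S - n))^2)
      (fun n h hp => by omega)
      (fun n h => by
        show sB (n + 1) ^ 2 * sF (N_S - n) ^ 2 = 0
        rw [hsB0 (n + 1) (by omega)]; ring)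
      (fun n h hp => by
        show sB (n + 1) ^ 2 * sF (N_S - n) ^ 2 = 0
        have hp' : ¬(n < N_S ∧ N_S ≤ N_T + n) := hp
        rw [hsF0 (N_S - n) (by omega)]; ring)
end

section
/- Let Q ∈ ℂ^{N_T×N_T} be positive semi-definite and η > 0, and define R : ℂ^{N_S×N_S} → ℝ (viewing ℂ^{N_S×N_S} as a real vector space) by R(Θ) = log det(I + (1/η)·H(Θ)·Q·H(Θ)ᴴ), where H(Θ) = H_D + H_B·Θ·H_F (the determinant is a real number ≥ 1 since the matrix is positive definite Hermitian). Then R is Fréchet differentiable over ℝ at every Θ, and its derivative in the direction Δ ∈ ℂ^{N_S×N_S} equals (2/η)·Re tr( Δᴴ · H_Bᴴ · (I + (1/η)·H(Θ)·Q·H(Θ)ᴴ)⁻¹ · H(Θ) · Q · H_Fᴴ ). -/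
/-! Write `M(Θ) = 1 + η⁻¹ H(Θ) Q H(Θ)ᴴ`, so that `R = log ∘ re ∘ det ∘ M`. Since the determinant is
multilinear in the rows, Jacobi's formula `d det_A (E) = tr (adj A · E)` holds, and as `M(Θ)` is
positive definite, `adj M = det M · M⁻¹` with `det M > 0` real; hence `dR(Δ) = Re tr (M⁻¹ dM(Δ))`.
By the product rule `dM(Δ) = η⁻¹ (Y + Yᴴ)` with `Y = H Q (H_B Δ H_F)ᴴ`, and `Re tr (M⁻¹ Yᴴ) =
Re tr (M⁻¹ Y)` because `M⁻¹` is Hermitian; cyclicity of the trace gives the stated formula. -/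

open Matrix
open scoped ComplexOrder

attribute [local instance] Matrix.normedAddCommGroup Matrix.normedSpace

namespace Matrix

variable {l m n p : Type*} [Fintype l] [Fintype m] [Fintype n] [Fintype p]

theorem sum_det_updateRow_eq_trace_adjugate_mul [DecidableEq n] {R : Type*} [CommRing R]
    (A E : Matrix n n R) : ∑ i, (A.updateRow i (E i)).det = trace (A.adjugate * E) := by
  have h : ∀ i, (A.updateRow i (E i)).det = ∑ j, A.adjugate j i * E i j := by
    intro i
    rw [← cramer_transpose_apply, cramer_eq_adjugate_mulVec, ← adjugate_transpose]
    simp [mulVec, dotProduct, transpose_apply]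
  simp_rw [h, trace, diag, mul_apply]
  exact Finset.sum_comm

theorem IsHermitian.re_trace_mul_add_conjTranspose {𝕜 : Type*} [RCLike 𝕜] {P : Matrix n n 𝕜}
    (hP : P.IsHermitian) (Y : Matrix n n 𝕜) :
    RCLike.re (trace (P * (Y + Yᴴ))) = 2 * RCLike.re (trace (P * Y)) := by
  have h : trace (P * Yᴴ) = star (trace (P * Y)) := by
    rw [← trace_conjTranspose, conjTranspose_mul, hP.eq, trace_mul_comm]
  rw [mul_add, trace_add, h, map_add, RCLike.star_def, RCLike.conj_re, two_mul]

variable (R : Type*) {α : Type*} [CommSemiring R] [StarRing R] [TrivialStar R]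
  [TopologicalSpace α] [AddCommMonoid α] [StarAddMonoid α] [Module R α] [StarModule R α]
  [ContinuousStar α] in
def conjTransposeCLM : Matrix m n α →L[R] Matrix n m α where
  toFun := conjTranspose
  map_add' := conjTranspose_add
  map_smul' c X := by simp [conjTranspose_smul]
  cont := continuous_id.matrix_conjTranspose

section Calculus

variable {𝕜 : Type*} [NontriviallyNormedField 𝕜] [CompleteSpace 𝕜]
  {E : Type*} [NormedAddCommGroup E] [NormedSpace 𝕜 E]

noncomputable def traceMulCLM (B : Matrix m n 𝕜) : Matrix n m 𝕜 →L[𝕜] 𝕜 :=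
  LinearMap.toContinuousLinearMap (traceLinearMap m 𝕜 𝕜 ∘ₗ mulLeftLinearMap m 𝕜 B)

theorem hasFDerivAt_det [DecidableEq n] (A : Matrix n n 𝕜) :
    HasFDerivAt det (traceMulCLM A.adjugate) A := by
  let D : ContinuousMultilinearMap 𝕜 (fun _ : n => n → 𝕜) 𝕜 :=
    { toMultilinearMap := (detRowAlternating (R := 𝕜)).toMultilinearMap
      cont := continuous_id.matrix_det }
  refine (D.hasFDerivAt A).congr_fderiv (ContinuousLinearMap.ext fun E => ?_)
  exact (D.linearDeriv_apply (A : n → n → 𝕜) E).trans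
    (sum_det_updateRow_eq_trace_adjugate_mul A E)

variable {α : Type*} [NormedRing α] [NormedAlgebra 𝕜 α] [FiniteDimensional 𝕜 α]

variable (𝕜) in
noncomputable def mulCLM : Matrix l m α →L[𝕜] Matrix m p α →L[𝕜] Matrix l p α :=
  LinearMap.toContinuousLinearMap
    (LinearMap.toContinuousLinearMap.toLinearMap ∘ₗ mulLinearMap 𝕜)

theorem _root_.HasFDerivAt.matrix_mul {f : E → Matrix l m α} {g : E → Matrix m p α}
    {f' : E →L[𝕜] Matrix l m α} {g' : E →L[𝕜] Matrix m p α} {x : E}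
    (hf : HasFDerivAt f f' x) (hg : HasFDerivAt g g' x) :
    HasFDerivAt (fun y => f y * g y)
      ((mulCLM 𝕜).precompR E (f x) g' + (mulCLM 𝕜).precompL E f' (g x)) x :=
  (mulCLM 𝕜).hasFDerivAt_of_bilinear hf hg

theorem _root_.HasFDerivAt.const_matrix_mul {f : E → Matrix m p α} {f' : E →L[𝕜] Matrix m p α}
    {x : E} (B : Matrix l m α) (hf : HasFDerivAt f f' x) :
    HasFDerivAt (fun y => B * f y) ((mulCLM 𝕜 B).comp f') x :=
  (mulCLM 𝕜 B).hasFDerivAt.comp x hf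

theorem _root_.HasFDerivAt.matrix_mul_const {f : E → Matrix l m α} {f' : E →L[𝕜] Matrix l m α}
    {x : E} (B : Matrix m p α) (hf : HasFDerivAt f f' x) :
    HasFDerivAt (fun y => f y * B) (((mulCLM 𝕜).flip B).comp f') x :=
  ((mulCLM 𝕜 : Matrix l m α →L[𝕜] Matrix m p α →L[𝕜] Matrix l p α).flip B).hasFDerivAt.comp x hf

end Calculus

theorem _root_.HasFDerivAt.log_re_det [DecidableEq n] {E : Type*} [NormedAddCommGroup E]
    [NormedSpace ℝ E] {F : E → Matrix n n ℂ} {F' : E →L[ℝ] Matrix n n ℂ} {x : E}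
    (hF : HasFDerivAt F F' x) (hdet : 0 < (F x).det) :
    HasFDerivAt (fun y => Real.log (F y).det.re)
      (Complex.reCLM.comp (((traceMulCLM (F x)⁻¹).restrictScalars ℝ).comp F')) x := by
  obtain ⟨hdet_re, hdet_im⟩ := Complex.pos_iff.mp hdet
  have hdet_real : ((F x).det.re : ℂ) = (F x).det := Complex.ext rfl (by simp [hdet_im])
  have hadj : (F x).adjugate = (F x).det • (F x)⁻¹ := by
    rw [(F x).nonsing_inv_apply (isUnit_iff_ne_zero.mpr hdet.ne'), smul_smul,
      IsUnit.mul_val_inv, one_smul]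
  have h := (Real.hasDerivAt_log hdet_re.ne').comp_hasFDerivAt x
    (Complex.reCLM.hasFDerivAt.comp x (((hasFDerivAt_det (F x)).restrictScalars ℝ).comp x hF))
  refine h.congr_fderiv (ContinuousLinearMap.ext fun v => ?_)
  show (F x).det.re⁻¹ * (trace ((F x).adjugate * F' v)).re = (trace ((F x)⁻¹ * F' v)).re
  rw [hadj, smul_mul, trace_smul, smul_eq_mul, ← hdet_real, Complex.ofReal_re,
    Complex.re_ofReal_mul, inv_mul_cancel_left₀ hdet_re.ne']

end Matrix

theorem stmt17 {N_T N_R N_S : ℕ}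
    (H_D : Matrix (Fin N_R) (Fin N_T) ℂ)
    (H_B : Matrix (Fin N_R) (Fin N_S) ℂ)
    (H_F : Matrix (Fin N_S) (Fin N_T) ℂ)
    (Q : Matrix (Fin N_T) (Fin N_T) ℂ) (hQ : Q.PosSemidef)
    (η : ℝ) (hη : 0 < η)
    (H : Matrix (Fin N_S) (Fin N_S) ℂ → Matrix (Fin N_R) (Fin N_T) ℂ)
    (hH : ∀ Θ, H Θ = H_D + H_B * Θ * H_F)
    (R : Matrix (Fin N_S) (Fin N_S) ℂ → ℝ)
    (hR : ∀ Θ, R Θ =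
      Real.log ((1 + (η⁻¹ : ℂ) • (H Θ * Q * (H Θ)ᴴ)).det).re) :
    ∀ Θ : Matrix (Fin N_S) (Fin N_S) ℂ,
      ∃ f' : Matrix (Fin N_S) (Fin N_S) ℂ →L[ℝ] ℝ,
        HasFDerivAt R f' Θ ∧
        ∀ Δ : Matrix (Fin N_S) (Fin N_S) ℂ,
          f' Δ = (2 / η) *
            (Matrix.trace (Δᴴ * (H_Bᴴ *
              (1 + (η⁻¹ : ℂ) • (H Θ * Q * (H Θ)ᴴ))⁻¹ * H Θ * Q * H_Fᴴ))).re := by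
  intro Θ
  have hH' : HasFDerivAt H _ Θ :=
    ((((hasFDerivAt_id (𝕜 := ℝ) Θ).const_matrix_mul H_B).matrix_mul_const H_F).const_add
      H_D).congr_of_eventuallyEq (.of_forall hH)
  have hM : HasFDerivAt (fun Θ => 1 + (η⁻¹ : ℂ) • (H Θ * Q * (H Θ)ᴴ)) _ Θ :=
    (((hH'.matrix_mul_const Q).matrix_mul
      ((conjTransposeCLM ℝ).hasFDerivAt.comp Θ hH')).const_smul (η⁻¹ : ℂ)).const_add 1
  set M := 1 + (η⁻¹ : ℂ) • (H Θ * Q * (H Θ)ᴴ)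
  have hM_pos : M.PosDef := PosDef.one.add_posSemidef <|
    (hQ.mul_mul_conjTranspose_same (H Θ)).smul (inv_nonneg.mpr (Complex.zero_le_real.mpr hη.le))
  obtain rfl : R = _ := funext hR
  refine ⟨_, hM.log_re_det hM_pos.det_pos, fun Δ => ?_⟩
  show (trace (M⁻¹ * ((η⁻¹ : ℂ) • (H Θ * Q * (H_B * Δ * H_F)ᴴ
    + H_B * Δ * H_F * Q * (H Θ)ᴴ)))).re = _
  have hY : H_B * Δ * H_F * Q * (H Θ)ᴴ = (H Θ * Q * (H_B * Δ * H_F)ᴴ)ᴴ := by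
    simp only [conjTranspose_mul, conjTranspose_conjTranspose, hQ.isHermitian.eq, Matrix.mul_assoc]
  have hcyc : trace (M⁻¹ * (H Θ * Q * (H_B * Δ * H_F)ᴴ))
      = trace (Δᴴ * (H_Bᴴ * M⁻¹ * H Θ * Q * H_Fᴴ)) := by
    rw [show M⁻¹ * (H Θ * Q * (H_B * Δ * H_F)ᴴ) = (M⁻¹ * H Θ * Q * H_Fᴴ) * (Δᴴ * H_Bᴴ) by
      simp only [conjTranspose_mul, Matrix.mul_assoc], trace_mul_comm]
    simp only [Matrix.mul_assoc]
  have hre := hM_pos.isHermitian.inv.re_trace_mul_add_conjTranspose (H Θ * Q * (H_B * Δ * H_F)ᴴ)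
  rw [RCLike.re_to_complex, RCLike.re_to_complex] at hre
  rw [hY, Matrix.mul_smul, trace_smul, smul_eq_mul, ← Complex.ofReal_inv, Complex.re_ofReal_mul,
    hre, hcyc]
  ring
end

section
/- Define f(Θ) = ‖H_D + H_B·Θ·H_F‖_F² and M(Θ) = H_Bᴴ·(H_D + H_B·Θ·H_F)·H_Fᴴ. For any matrices Θ, Θ̃ ∈ ℂ^{N_S×N_S}, if Re tr(Θ̃ᴴ·M(Θ)) ≥ Re tr(Θᴴ·M(Θ)), then f(Θ̃) ≥ f(Θ). In particular, replacing Θ by any maximizer of the linearized objective Re tr(Xᴴ·M(Θ)) does not decrease the channel power gain f. -/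
open Matrix

theorem stmt19 {N_T N_R N_S : ℕ}
    (H_D : Matrix (Fin N_R) (Fin N_T) ℂ)
    (H_B : Matrix (Fin N_R) (Fin N_S) ℂ)
    (H_F : Matrix (Fin N_S) (Fin N_T) ℂ)
    (f : Matrix (Fin N_S) (Fin N_S) ℂ → ℝ)
    (hf : ∀ X, f X = (Matrix.trace
      ((H_D + H_B * X * H_F) * (H_D + H_B * X * H_F)ᴴ)).re)
    (Mf : Matrix (Fin N_S) (Fin N_S) ℂ → Matrix (Fin N_S) (Fin N_S) ℂ)
    (hM : ∀ X, Mf X = H_Bᴴ * (H_D + H_B * X * H_F) * H_Fᴴ)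
    (Θ Θt : Matrix (Fin N_S) (Fin N_S) ℂ)
    (h : (Matrix.trace (Θᴴ * Mf Θ)).re ≤ (Matrix.trace (Θtᴴ * Mf Θ)).re) :
    f Θ ≤ f Θt := by
  set A := H_D + H_B * Θ * H_F with hA
  set C := H_B * (Θt - Θ) * H_F with hCdef
  have hsplit : H_D + H_B * Θt * H_F = A + C := by
    rw [hA, hCdef, Matrix.mul_sub, Matrix.sub_mul]
    abel
  have htr : Matrix.trace (A * Cᴴ)
      = Matrix.trace (Θtᴴ * Mf Θ) - Matrix.trace (Θᴴ * Mf Θ) := by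
    rw [hM, hCdef]
    have h1 : A * (H_B * (Θt - Θ) * H_F)ᴴ
        = (A * H_Fᴴ) * ((Θt - Θ)ᴴ * H_Bᴴ) := by
      simp [conjTranspose_mul, Matrix.mul_assoc]
    rw [h1, Matrix.trace_mul_comm]
    have h2 : (Θt - Θ)ᴴ * H_Bᴴ * (A * H_Fᴴ)
        = Θtᴴ * (H_Bᴴ * A * H_Fᴴ) - Θᴴ * (H_Bᴴ * A * H_Fᴴ) := by
      simp [conjTranspose_sub, Matrix.sub_mul, Matrix.mul_assoc]
    rw [h2, Matrix.trace_sub]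
  have hCA : Matrix.trace (C * Aᴴ) = star (Matrix.trace (A * Cᴴ)) := by
    rw [← Matrix.trace_conjTranspose, conjTranspose_mul, conjTranspose_conjTranspose]
  have hCC : 0 ≤ (Matrix.trace (C * Cᴴ)).re := by
    simp only [Matrix.trace, Matrix.diag, Matrix.mul_apply, Matrix.conjTranspose_apply,
      Complex.re_sum]
    apply Finset.sum_nonneg; intro i _
    apply Finset.sum_nonneg; intro j _
    simp [Complex.star_def, Complex.mul_conj]
    exact Complex.normSq_nonneg _
  have hexp : f Θt = f Θ + (Matrix.trace (C * Cᴴ)).re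
      + 2 * ((Matrix.trace (Θtᴴ * Mf Θ)).re - (Matrix.trace (Θᴴ * Mf Θ)).re) := by
    rw [hf, hf, hsplit, ← hA]
    rw [conjTranspose_add, Matrix.add_mul, Matrix.mul_add, Matrix.mul_add,
      Matrix.trace_add, Matrix.trace_add, Matrix.trace_add, hCA, htr]
    simp only [Complex.add_re, Complex.sub_re, Complex.star_def, Complex.conj_re]
    ring
  rw [hexp]
  nlinarith [hCC, h]
end
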